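/- arXiv:1502.05763 — 8 statements merged into one kernel-verified Lean document; each statement's English description precedes it below -/
import Mathlib

section
/- Let (Ω, 𝓕) be a measurable space and let X be a linear space of bounded 𝓕-measurable functions f : Ω → ℝ containing the indicator function 1_A for every A ∈ 𝓕. Let φ : X → ℝ ∪ {+∞} be an increasing convex functional. Then for every f in the algebraic interior I(φ) of the effective domain of φ, the supremum sup over μ ∈ ba⁺(𝓕) of (⟨f,μ⟩ − φ*_X(μ)) equals φ(f) and is attained, i.e. φ(f) = max_{μ ∈ ba⁺(𝓕)} (⟨f,μ⟩ − φ*_X(μ)). -/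
/-
The one-sided directional derivative `h ↦ inf_{t > 0} (φ(f + t h) - φ f) / t` of the convex
functional `φ` is real-valued and sublinear because `f` lies in the algebraic interior of `dom φ`.
By Hahn–Banach some linear `ℓ` lies below it; `ℓ` is then a subgradient of `φ` at `f`, and it is
positive because `φ` is increasing. A positive linear functional on `X` is integration against the
finitely additive measure `μ A = ℓ 1_A` (bounded measurable functions are uniform limits of simple
ones from below). The subgradient inequality says that `f` attains the supremum defining
`φ*(μ)`, so `φ f = ⟨f, μ⟩ - φ*(μ)`; the inequality for every other `μ` is Fenchel–Young.
-/

open MeasureTheory Filter Topology Set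

/-- A finitely additive nonnegative measure with finite total mass on a measurable space. -/
structure FinAddMeasure (Ω : Type*) [MeasurableSpace Ω] where
  meas : Set Ω → ℝ
  nonneg : ∀ A, 0 ≤ meas A
  empty : meas ∅ = 0
  additive : ∀ A B : Set Ω, MeasurableSet A → MeasurableSet B → Disjoint A B →
    meas (A ∪ B) = meas A + meas B

/-- Elementary integral of a simple function with respect to a finitely additive measure. -/
noncomputable def FinAddMeasure.simpleIntegral {Ω : Type*} [MeasurableSpace Ω]
    (μ : FinAddMeasure Ω) (g : SimpleFunc Ω ℝ) : ℝ :=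
  ∑ x ∈ g.range, x * μ.meas (g ⁻¹' {x})

/-- Integral ⟨f,μ⟩ of a (bounded measurable) function with respect to a finitely additive
measure, defined as the supremum of elementary integrals of simple functions below `f`. -/
noncomputable def FinAddMeasure.integral {Ω : Type*} [MeasurableSpace Ω]
    (μ : FinAddMeasure Ω) (f : Ω → ℝ) : ℝ :=
  sSup {r | ∃ g : SimpleFunc Ω ℝ, (∀ ω, g ω ≤ f ω) ∧ r = μ.simpleIntegral g}

/-- The convex conjugate φ*_X of an increasing convex functional on a space `X` of bounded
measurable functions, evaluated at a finitely additive measure. -/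
noncomputable def faConj {Ω : Type*} [MeasurableSpace Ω] (X : Submodule ℝ (Ω → ℝ))
    (φ : X → EReal) (μ : FinAddMeasure Ω) : EReal :=
  ⨆ g : X, ((μ.integral g : ℝ) : EReal) - φ g

open scoped Pointwise

section RadialDeriv

variable {E : Type*} [AddCommGroup E] [Module ℝ E] {D : Set E} {Φ : E → ℝ} {f : E}

def diffQuotients (D : Set E) (Φ : E → ℝ) (f h : E) : Set ℝ :=
  (fun t : ℝ => (Φ (f + t • h) - Φ f) / t) '' {t | 0 < t ∧ f + t • h ∈ D}

/-- For convex `Φ` the difference quotients decrease as `t ↓ 0`, so this infimum is the one-sided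
directional derivative of `Φ` at `f` in direction `h`. -/
noncomputable def radialDeriv (D : Set E) (Φ : E → ℝ) (f h : E) : ℝ :=
  sInf (diffQuotients D Φ f h)

lemma diffQuotients_nonempty (hf : ∀ h, ∃ t > (0 : ℝ), f + t • h ∈ D) (h : E) :
    (diffQuotients D Φ f h).Nonempty := by
  obtain ⟨t, ht, hD⟩ := hf h
  exact ⟨_, t, ⟨ht, hD⟩, rfl⟩

lemma diffQuotients_smul {c : ℝ} (hc : 0 < c) (h : E) :
    diffQuotients D Φ f (c • h) = c • diffQuotients D Φ f h := by
  ext r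
  simp only [diffQuotients, Set.mem_smul_set, Set.mem_image, Set.mem_ofPred_eq, smul_smul,
    smul_eq_mul]
  constructor
  · rintro ⟨t, ⟨ht, hD⟩, rfl⟩
    refine ⟨_, ⟨t * c, ⟨by positivity, hD⟩, rfl⟩, ?_⟩
    field_simp
  · rintro ⟨_, ⟨t, ⟨ht, hD⟩, rfl⟩, rfl⟩
    refine ⟨t / c, ⟨by positivity, by rwa [div_mul_cancel₀ _ hc.ne']⟩, ?_⟩
    rw [div_mul_cancel₀ _ hc.ne']
    field_simp

/-- With `τ = t s / (t + s)`, the point `f + τ • (h + k)` is the convex combination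
`s / (t + s) • (f + t • h) + t / (t + s) • (f + s • k)`. -/
lemma ConvexOn.exists_diffQuotient_add_le (hΦ : ConvexOn ℝ D Φ) {h k : E} {a b : ℝ}
    (ha : a ∈ diffQuotients D Φ f h) (hb : b ∈ diffQuotients D Φ f k) :
    ∃ c ∈ diffQuotients D Φ f (h + k), c ≤ a + b := by
  obtain ⟨t, ⟨ht, hth⟩, rfl⟩ := ha
  obtain ⟨s, ⟨hs, hsk⟩, rfl⟩ := hb
  have hts : 0 < t + s := by positivity
  have hsum : s / (t + s) + t / (t + s) = 1 := by
    rw [← add_div, add_comm, div_self hts.ne']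
  have hcomb : (s / (t + s)) • (f + t • h) + (t / (t + s)) • (f + s • k) =
      f + (t * s / (t + s)) • (h + k) := by
    match_scalars <;> field_simp
    ring
  have hle := hΦ.2 hth hsk (by positivity) (by positivity) hsum
  rw [hcomb, smul_eq_mul, smul_eq_mul] at hle
  refine ⟨_, ⟨t * s / (t + s), ⟨by positivity, hcomb ▸ hΦ.1 hth hsk (by positivity)
    (by positivity) hsum⟩, rfl⟩, ?_⟩
  calc (Φ (f + (t * s / (t + s)) • (h + k)) - Φ f) / (t * s / (t + s))
      ≤ (s / (t + s) * Φ (f + t • h) + t / (t + s) * Φ (f + s • k) - Φ f) / (t * s / (t + s)) := by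
        gcongr
    _ = (Φ (f + t • h) - Φ f) / t + (Φ (f + s • k) - Φ f) / s := by
        field_simp
        ring

lemma ConvexOn.bddBelow_diffQuotients (hΦ : ConvexOn ℝ D Φ)
    (hf : ∀ h, ∃ t > (0 : ℝ), f + t • h ∈ D) (h : E) : BddBelow (diffQuotients D Φ f h) := by
  obtain ⟨b, hb⟩ := diffQuotients_nonempty hf (-h) (Φ := Φ)
  refine ⟨-b, fun a ha => ?_⟩
  obtain ⟨c, ⟨t, -, rfl⟩, hc⟩ := hΦ.exists_diffQuotient_add_le ha hb
  simp only [add_neg_cancel, smul_zero, add_zero, sub_self, zero_div] at hc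
  linarith

lemma ConvexOn.radialDeriv_le (hΦ : ConvexOn ℝ D Φ)
    (hf : ∀ h, ∃ t > (0 : ℝ), f + t • h ∈ D)
    {h : E} {r : ℝ} (hr : r ∈ diffQuotients D Φ f h) : radialDeriv D Φ f h ≤ r :=
  csInf_le (hΦ.bddBelow_diffQuotients hf h) hr

lemma ConvexOn.radialDeriv_add_le (hΦ : ConvexOn ℝ D Φ)
    (hf : ∀ h, ∃ t > (0 : ℝ), f + t • h ∈ D)
    (h k : E) : radialDeriv D Φ f (h + k) ≤ radialDeriv D Φ f h + radialDeriv D Φ f k := by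
  unfold radialDeriv
  rw [← csInf_add (diffQuotients_nonempty hf h)
    (hΦ.bddBelow_diffQuotients hf h) (diffQuotients_nonempty hf k)
    (hΦ.bddBelow_diffQuotients hf k)]
  refine le_csInf ((diffQuotients_nonempty hf h).add (diffQuotients_nonempty hf k)) ?_
  rintro _ ⟨a, ha, b, hb, rfl⟩
  obtain ⟨c, hc, hcab⟩ := hΦ.exists_diffQuotient_add_le ha hb
  exact (hΦ.radialDeriv_le hf hc).trans hcab

lemma radialDeriv_smul {c : ℝ} (hc : 0 < c) (h : E) :
    radialDeriv D Φ f (c • h) = c * radialDeriv D Φ f h := by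
  rw [radialDeriv, diffQuotients_smul hc, Real.sInf_smul_of_nonneg hc.le, smul_eq_mul, radialDeriv]

theorem ConvexOn.exists_linearMap_sub_le (hΦ : ConvexOn ℝ D Φ)
    (hf : ∀ h, ∃ t > (0 : ℝ), f + t • h ∈ D) :
    ∃ ℓ : E →ₗ[ℝ] ℝ, ∀ g ∈ D, ℓ g - ℓ f ≤ Φ g - Φ f := by
  have h0 : ∀ x : (⊥ : E →ₗ.[ℝ] ℝ).domain, (⊥ : E →ₗ.[ℝ] ℝ) x ≤ radialDeriv D Φ f x := by
    rintro ⟨x, hx⟩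
    obtain rfl : x = 0 := hx
    have h2 := radialDeriv_smul (D := D) (Φ := Φ) (f := f) two_pos (0 : E)
    rw [smul_zero] at h2
    show (0 : ℝ) ≤ radialDeriv D Φ f 0
    linarith
  obtain ⟨ℓ, -, hℓ⟩ := exists_extension_of_le_sublinear (⊥ : E →ₗ.[ℝ] ℝ) (radialDeriv D Φ f)
    (fun _ hc h => radialDeriv_smul hc h) (hΦ.radialDeriv_add_le hf) h0
  refine ⟨ℓ, fun g hg => ?_⟩
  rw [← map_sub]
  refine (hℓ _).trans (hΦ.radialDeriv_le hf ⟨1, ⟨one_pos, ?_⟩, ?_⟩) <;> simp [hg]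

end RadialDeriv

section EReal

variable {E : Type*} [AddCommGroup E] [Module ℝ E] {φ : E → EReal}

lemma convexOn_toReal_setOf_lt_top (hbot : ∀ x, φ x ≠ ⊥)
    (hconv : ∀ x y : E, ∀ a b : ℝ, 0 ≤ a → 0 ≤ b → a + b = 1 →
      φ (a • x + b • y) ≤ (a : EReal) * φ x + (b : EReal) * φ y) :
    ConvexOn ℝ {x | φ x < ⊤} (fun x => (φ x).toReal) := by
  have hreal : ∀ x, φ x < ⊤ → φ x = ((φ x).toReal : EReal) :=
    fun x hx => (EReal.coe_toReal hx.ne (hbot x)).symm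
  have key : ∀ x, φ x < ⊤ → ∀ y, φ y < ⊤ → ∀ a b : ℝ, 0 ≤ a → 0 ≤ b → a + b = 1 →
      φ (a • x + b • y) ≤ ((a * (φ x).toReal + b * (φ y).toReal : ℝ) : EReal) := by
    intro x hx y hy a b ha hb hab
    have := hconv x y a b ha hb hab
    rwa [hreal x hx, hreal y hy, ← EReal.coe_mul, ← EReal.coe_mul, ← EReal.coe_add] at this
  refine ⟨fun x hx y hy a b ha hb hab => (key x hx y hy a b ha hb hab).trans_lt
    (EReal.coe_lt_top _), fun x hx y hy a b ha hb hab => ?_⟩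
  have := EReal.toReal_le_toReal (key x hx y hy a b ha hb hab) (hbot _) (EReal.coe_ne_top _)
  rwa [EReal.toReal_coe] at this

theorem exists_linearMap_sub_le_of_convex (hbot : ∀ x, φ x ≠ ⊥)
    (hconv : ∀ x y : E, ∀ a b : ℝ, 0 ≤ a → 0 ≤ b → a + b = 1 →
      φ (a • x + b • y) ≤ (a : EReal) * φ x + (b : EReal) * φ y)
    {f : E} (hf : ∀ h, ∃ t > (0 : ℝ), φ (f + t • h) < ⊤) :
    ∃ ℓ : E →ₗ[ℝ] ℝ, ∀ g, (ℓ g : EReal) - φ g ≤ (ℓ f : EReal) - φ f := by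
  obtain ⟨ℓ, hℓ⟩ := (convexOn_toReal_setOf_lt_top hbot hconv).exists_linearMap_sub_le hf
  have hff : φ f < ⊤ := by
    obtain ⟨t, -, ht⟩ := hf 0
    simpa using ht
  refine ⟨ℓ, fun g => ?_⟩
  rcases (le_top : φ g ≤ ⊤).lt_or_eq with hg | hg
  · rw [← EReal.coe_toReal hg.ne (hbot g), ← EReal.coe_toReal hff.ne (hbot f), ← EReal.coe_sub,
      ← EReal.coe_sub, EReal.coe_le_coe_iff]
    linarith [hℓ g hg]
  · simp [hg]

end EReal

namespace MeasureTheory.SimpleFunc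

variable {Ω : Type*} [MeasurableSpace Ω]

lemma exists_le_le_add_of_abs_le {g : Ω → ℝ} (hg : Measurable g) {M : ℝ}
    (hM : ∀ ω, |g ω| ≤ M) {δ : ℝ} (hδ : 0 < δ) :
    ∃ s : SimpleFunc Ω ℝ, ∀ ω, s ω ≤ g ω ∧ g ω ≤ s ω + δ := by
  have hmeas : Measurable fun ω => δ * (⌊g ω / δ⌋ : ℝ) :=
    measurable_const.mul (measurable_from_top.comp (hg.div_const δ).floor)
  have hcancel : ∀ ω, δ * (g ω / δ) = g ω := fun ω => by field_simp
  refine ⟨⟨fun ω => δ * (⌊g ω / δ⌋ : ℝ), fun x => hmeas (measurableSet_singleton x), ?_⟩,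
    fun ω => ⟨?_, ?_⟩⟩
  · refine ((Set.finite_Icc ⌊-M / δ⌋ ⌊M / δ⌋).image fun k : ℤ => δ * (k : ℝ)).subset ?_
    rintro _ ⟨ω, rfl⟩
    obtain ⟨hl, hr⟩ := abs_le.mp (hM ω)
    exact ⟨⌊g ω / δ⌋, ⟨Int.floor_le_floor (by gcongr), Int.floor_le_floor (by gcongr)⟩, rfl⟩
  · simpa [hcancel ω] using mul_le_mul_of_nonneg_left (Int.floor_le (g ω / δ)) hδ.le
  · have := mul_lt_mul_of_pos_left (Int.lt_floor_add_one (g ω / δ)) hδ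
    rw [mul_add, mul_one, hcancel ω] at this
    exact this.le

lemma coe_eq_sum_smul_indicator (s : SimpleFunc Ω ℝ) :
    (s : Ω → ℝ) = ∑ x ∈ s.range, x • (s ⁻¹' {x}).indicator (fun _ => (1 : ℝ)) := by
  funext ω
  rw [Finset.sum_apply, Finset.sum_eq_single (s ω)]
  · simp
  · intro b _ hb
    simp [Set.indicator_of_notMem (show ω ∉ s ⁻¹' {b} by simp [Ne.symm hb])]
  · exact fun h => absurd (mem_range_self s ω) h

lemma coe_mem_of_indicator_mem {X : Submodule ℝ (Ω → ℝ)}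
    (hXind : ∀ A : Set Ω, MeasurableSet A → A.indicator (fun _ => (1 : ℝ)) ∈ X)
    (s : SimpleFunc Ω ℝ) : (s : Ω → ℝ) ∈ X := by
  rw [coe_eq_sum_smul_indicator s]
  exact Submodule.sum_mem _ fun x _ => Submodule.smul_mem _ _ (hXind _ (s.measurableSet_fiber x))

end MeasureTheory.SimpleFunc

namespace FinAddMeasure

variable {Ω : Type*} [MeasurableSpace Ω] {X : Submodule ℝ (Ω → ℝ)}

open Classical in
noncomputable def ofPositiveLinear
    (hXind : ∀ A : Set Ω, MeasurableSet A → A.indicator (fun _ => (1 : ℝ)) ∈ X)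
    (ℓ : X →ₗ[ℝ] ℝ) (hℓ : ∀ g : X, (∀ ω, 0 ≤ (g : Ω → ℝ) ω) → 0 ≤ ℓ g) : FinAddMeasure Ω where
  meas A := if hA : MeasurableSet A then ℓ ⟨A.indicator (fun _ => 1), hXind A hA⟩ else 0
  nonneg A := by
    split_ifs
    · exact hℓ _ fun ω => Set.indicator_nonneg (fun _ _ => zero_le_one) ω
    · exact le_rfl
  empty := by
    simp only [dif_pos MeasurableSet.empty, Set.indicator_empty]
    exact map_zero ℓ
  additive A B hA hB hAB := by
    rw [dif_pos (hA.union hB), dif_pos hA, dif_pos hB, ← map_add]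
    congr
    exact Set.indicator_union_of_disjoint hAB _

variable {hXind : ∀ A : Set Ω, MeasurableSet A → A.indicator (fun _ => (1 : ℝ)) ∈ X}
  {ℓ : X →ₗ[ℝ] ℝ} {hℓ : ∀ g : X, (∀ ω, 0 ≤ (g : Ω → ℝ) ω) → 0 ≤ ℓ g}

lemma ofPositiveLinear_meas {A : Set Ω} (hA : MeasurableSet A) :
    (ofPositiveLinear hXind ℓ hℓ).meas A = ℓ ⟨A.indicator (fun _ => 1), hXind A hA⟩ := by
  classical exact dif_pos hA

lemma simpleIntegral_ofPositiveLinear (s : SimpleFunc Ω ℝ) :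
    (ofPositiveLinear hXind ℓ hℓ).simpleIntegral s =
      ℓ ⟨s, SimpleFunc.coe_mem_of_indicator_mem hXind s⟩ := by
  have hs : (⟨s, SimpleFunc.coe_mem_of_indicator_mem hXind s⟩ : X) =
      ∑ x ∈ s.range, x • (⟨(s ⁻¹' {x}).indicator (fun _ => 1),
        hXind _ (s.measurableSet_fiber x)⟩ : X) := by
    ext1
    simpa using s.coe_eq_sum_smul_indicator
  rw [hs, map_sum, simpleIntegral]
  refine Finset.sum_congr rfl fun x _ => ?_
  rw [map_smul, smul_eq_mul, ofPositiveLinear_meas (s.measurableSet_fiber x)]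

lemma integral_ofPositiveLinear {g : X} (hg : Measurable (g : Ω → ℝ))
    (hgb : ∃ M : ℝ, ∀ ω, |(g : Ω → ℝ) ω| ≤ M) :
    (ofPositiveLinear hXind ℓ hℓ).integral g = ℓ g := by
  set μ := ofPositiveLinear hXind ℓ hℓ
  have hmono : ∀ u v : X, (∀ ω, (u : Ω → ℝ) ω ≤ (v : Ω → ℝ) ω) → ℓ u ≤ ℓ v := by
    intro u v huv
    have := hℓ (v - u) fun ω => by simpa using huv ω
    rwa [map_sub, sub_nonneg] at this
  have hbdd : ∀ r ∈ {r | ∃ s : SimpleFunc Ω ℝ, (∀ ω, s ω ≤ (g : Ω → ℝ) ω) ∧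
      r = μ.simpleIntegral s}, r ≤ ℓ g := by
    rintro _ ⟨s, hs, rfl⟩
    rw [simpleIntegral_ofPositiveLinear]
    exact hmono _ _ hs
  obtain ⟨M, hM⟩ := hgb
  refine le_antisymm (csSup_le ⟨_, SimpleFunc.const Ω (-M),
    fun ω => by simpa using (abs_le.mp (hM ω)).1, rfl⟩ hbdd) ?_
  have h1 : (fun _ : Ω => (1 : ℝ)) ∈ X := by simpa using hXind Set.univ MeasurableSet.univ
  set c := ℓ ⟨fun _ => 1, h1⟩
  have hc : 0 ≤ c := hℓ _ fun _ => zero_le_one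
  -- `s ≤ g ≤ s + δ` with `δ = ε / (ℓ 1 + 1)` gives `ℓ g ≤ ℓ s + δ ℓ 1 ≤ ⟨s, μ⟩ + ε`
  refine le_of_forall_pos_le_add fun ε hε => ?_
  obtain ⟨s, hs⟩ := SimpleFunc.exists_le_le_add_of_abs_le hg hM
    (show 0 < ε / (c + 1) by positivity)
  have hgs : ℓ g ≤ ℓ ⟨s, SimpleFunc.coe_mem_of_indicator_mem hXind s⟩ + ε / (c + 1) * c := by
    rw [← smul_eq_mul, ← map_smul, ← map_add]
    exact hmono _ _ fun ω => by simpa using (hs ω).2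
  have hsup : μ.simpleIntegral s ≤ μ.integral g :=
    le_csSup ⟨ℓ g, hbdd⟩ ⟨s, fun ω => (hs ω).1, rfl⟩
  have hεc : ε / (c + 1) * c ≤ ε := by
    rw [div_mul_eq_mul_div, div_le_iff₀ (by positivity)]
    nlinarith
  rw [simpleIntegral_ofPositiveLinear] at hsup
  linarith

end FinAddMeasure

lemma EReal.coe_sub_coe_sub_cancel (a : ℝ) (x : EReal) : (a : EReal) - ((a : EReal) - x) = x := by
  induction x using EReal.rec with
  | bot => simp
  | coe x => rw [← EReal.coe_sub, ← EReal.coe_sub, sub_sub_cancel]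
  | top => simp

lemma nonneg_of_forall_sub_le_of_monotone {Ω : Type*} {X : Submodule ℝ (Ω → ℝ)}
    {φ : X → EReal} (hbot : ∀ f, φ f ≠ ⊥)
    (hmono : ∀ f g : X, (∀ ω, (g : Ω → ℝ) ω ≤ (f : Ω → ℝ) ω) → φ g ≤ φ f)
    {ℓ : X →ₗ[ℝ] ℝ} {f : X} (hf : φ f < ⊤)
    (hℓ : ∀ g, (ℓ g : EReal) - φ g ≤ (ℓ f : EReal) - φ f) (h : X)
    (hh : ∀ ω, 0 ≤ (h : Ω → ℝ) ω) : 0 ≤ ℓ h := by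
  have hle : φ (f - h) ≤ φ f := hmono _ _ fun ω => by simpa using hh ω
  have hfh := hℓ (f - h)
  rw [← EReal.coe_toReal (hle.trans_lt hf).ne (hbot _), ← EReal.coe_toReal hf.ne (hbot f),
    ← EReal.coe_sub, ← EReal.coe_sub, EReal.coe_le_coe_iff, map_sub] at hfh
  linarith [EReal.toReal_le_toReal hle (hbot _) hf.ne]

section Conjugate

variable {Ω : Type*} [MeasurableSpace Ω] {X : Submodule ℝ (Ω → ℝ)} {φ : X → EReal}

lemma integral_sub_faConj_le (μ : FinAddMeasure Ω) (f : X) :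
    (μ.integral f : EReal) - faConj X φ μ ≤ φ f :=
  calc (μ.integral f : EReal) - faConj X φ μ
      ≤ (μ.integral f : EReal) - ((μ.integral f : EReal) - φ f) :=
        EReal.sub_le_sub le_rfl (le_iSup (fun g : X => (μ.integral g : EReal) - φ g) f)
    _ = φ f := EReal.coe_sub_coe_sub_cancel _ _

lemma faConj_eq_of_forall_le {μ : FinAddMeasure Ω} {f : X}
    (h : ∀ g : X, (μ.integral g : EReal) - φ g ≤ (μ.integral f : EReal) - φ f) :
    faConj X φ μ = (μ.integral f : EReal) - φ f :=
  le_antisymm (iSup_le h) (le_iSup (fun g : X => (μ.integral g : EReal) - φ g) f)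

end Conjugate

theorem stmt0 {Ω : Type*} [MeasurableSpace Ω] (X : Submodule ℝ (Ω → ℝ))
    (hXmeas : ∀ f ∈ X, Measurable f)
    (hXbdd : ∀ f ∈ X, ∃ M : ℝ, ∀ ω, |f ω| ≤ M)
    (hXind : ∀ A : Set Ω, MeasurableSet A → A.indicator (fun _ => (1 : ℝ)) ∈ X)
    (φ : X → EReal) (hbot : ∀ f, φ f ≠ ⊥)
    (hmono : ∀ f g : X, (∀ ω, (g : Ω → ℝ) ω ≤ (f : Ω → ℝ) ω) → φ g ≤ φ f)
    (hconv : ∀ f g : X, ∀ a b : ℝ, 0 ≤ a → 0 ≤ b → a + b = 1 →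
      φ (a • f + b • g) ≤ (a : EReal) * φ f + (b : EReal) * φ g) :
    ∀ f : X, (φ f < ⊤ ∧ ∀ g : X, ∃ ε > (0 : ℝ), ∀ lam : ℝ, 0 ≤ lam → lam ≤ ε →
        φ (f + lam • g) < ⊤) →
      (∃ μ : FinAddMeasure Ω, φ f = ((μ.integral f : ℝ) : EReal) - faConj X φ μ) ∧
      (∀ μ : FinAddMeasure Ω, ((μ.integral f : ℝ) : EReal) - faConj X φ μ ≤ φ f) := by
  rintro f ⟨hf, hint⟩
  obtain ⟨ℓ, hℓ⟩ := exists_linearMap_sub_le_of_convex hbot hconv fun g =>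
    (hint g).imp fun ε ⟨hε, hg⟩ => ⟨hε, hg ε hε.le le_rfl⟩
  set μ := FinAddMeasure.ofPositiveLinear hXind ℓ
    (nonneg_of_forall_sub_le_of_monotone hbot hmono hf hℓ)
  have hμ : ∀ g : X, μ.integral g = ℓ g := fun g =>
    FinAddMeasure.integral_ofPositiveLinear (hXmeas g g.2) (hXbdd g g.2)
  refine ⟨⟨μ, ?_⟩, fun ν => integral_sub_faConj_le ν f⟩
  rw [faConj_eq_of_forall_le (by simpa only [hμ] using hℓ), EReal.coe_sub_coe_sub_cancel]
end

section
/- Let X be a Stone vector lattice over a non-empty set Ω and φ : X → ℝ ∪ {+∞} an increasing convex functional. Suppose there exists an f ∈ I(φ) such that φ(fⁿ) ↓ φ(f) for every sequence (fⁿ) in X with fⁿ ↓ f. Then for every g ∈ I(φ) and every sequence (gⁿ) in X with gⁿ ↓ g one has φ(gⁿ) ↓ φ(g). -/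
set_option maxHeartbeats 1000000

open MeasureTheory Filter Topology Set

/-- Proposition 1.1 (i) ⇒ (ii): for an increasing convex functional on a Stone vector lattice,
if continuity from above along decreasing sequences holds at one point of the algebraic
interior of the domain, it holds at every point of the algebraic interior. -/
theorem stmt1 {Ω : Type*} [Nonempty Ω] (X : Submodule ℝ (Ω → ℝ))
    (hXinf : ∀ f ∈ X, ∀ g ∈ X, f ⊓ g ∈ X)
    (hXone : ∀ f ∈ X, f ⊓ 1 ∈ X)
    (φ : X → EReal) (hbot : ∀ f, φ f ≠ ⊥)
    (hmono : ∀ f g : X, (∀ ω, (g : Ω → ℝ) ω ≤ (f : Ω → ℝ) ω) → φ g ≤ φ f)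
    (hconv : ∀ f g : X, ∀ a b : ℝ, 0 ≤ a → 0 ≤ b → a + b = 1 →
      φ (a • f + b • g) ≤ (a : EReal) * φ f + (b : EReal) * φ g)
    (hyp : ∃ f : X,
      (φ f < ⊤ ∧ ∀ g : X, ∃ ε > (0 : ℝ), ∀ lam : ℝ, 0 ≤ lam → lam ≤ ε →
        φ (f + lam • g) < ⊤) ∧
      ∀ fn : ℕ → X, (∀ ω, Antitone fun n => (fn n : Ω → ℝ) ω) →
        (∀ ω, Tendsto (fun n => (fn n : Ω → ℝ) ω) atTop (𝓝 ((f : Ω → ℝ) ω))) →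
        (Antitone fun n => φ (fn n)) ∧ Tendsto (fun n => φ (fn n)) atTop (𝓝 (φ f))) :
    ∀ g : X,
      (φ g < ⊤ ∧ ∀ h : X, ∃ ε > (0 : ℝ), ∀ lam : ℝ, 0 ≤ lam → lam ≤ ε →
        φ (g + lam • h) < ⊤) →
      ∀ gn : ℕ → X, (∀ ω, Antitone fun n => (gn n : Ω → ℝ) ω) →
        (∀ ω, Tendsto (fun n => (gn n : Ω → ℝ) ω) atTop (𝓝 ((g : Ω → ℝ) ω))) →
        (Antitone fun n => φ (gn n)) ∧ Tendsto (fun n => φ (gn n)) atTop (𝓝 (φ g)) := by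
  obtain ⟨f, ⟨hffin, hfdom⟩, hfcont⟩ := hyp
  intro g hg gn hganti hglim
  obtain ⟨hgfin, hgdom⟩ := hg
  have hA : Antitone fun n => φ (gn n) := fun m n hmn =>
    hmono _ _ (fun ω => hganti ω hmn)
  refine ⟨hA, ?_⟩
  have hge : ∀ n ω, (g : Ω → ℝ) ω ≤ (gn n : Ω → ℝ) ω := by
    intro n ω
    refine le_of_tendsto (hglim ω) ?_
    filter_upwards [eventually_ge_atTop n] with m hm
    exact hganti ω hm
  set L := ⨅ n, φ (gn n) with hLdef
  have hLt : Tendsto (fun n => φ (gn n)) atTop (𝓝 L) := tendsto_atTop_iInf hA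
  have hφgL : φ g ≤ L := le_iInf fun n => hmono _ _ (hge n)
  have hgne : φ g ≠ ⊤ := hgfin.ne
  have hfne : φ f ≠ ⊤ := hffin.ne
  set bg := (φ g).toReal with hbgdef
  set bf := (φ f).toReal with hbfdef
  have hbgeq : (bg : EReal) = φ g := EReal.coe_toReal hgne (hbot g)
  have hbfeq : (bf : EReal) = φ f := EReal.coe_toReal hfne (hbot f)
  obtain ⟨ε, hε, hεdom⟩ := hgdom (g - f)
  have hCfin : φ (g + ε • (g - f)) ≠ ⊤ := (hεdom ε hε.le le_rfl).ne
  set C := (φ (g + ε • (g - f))).toReal with hCdef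
  have hCeq : (C : EReal) = φ (g + ε • (g - f)) := EReal.coe_toReal hCfin (hbot _)
  set K := |bg| + 2 * |C - bg| / ε + |bf| + 1 with hKdef
  have hK1 : (1:ℝ) ≤ K := by
    have h0 : (0:ℝ) ≤ 2 * |C - bg| / ε := by positivity
    have := abs_nonneg bg
    have := abs_nonneg bf
    simp only [hKdef]; linarith
  -- Key bound
  have key : ∀ μ : ℝ, 0 < μ → μ ≤ min (1/2) (ε/2) →
      L ≤ ((bg + μ * K : ℝ) : EReal) := by
    intro μ hμ0 hμle
    have hμhalf : μ ≤ 1/2 := le_trans hμle (min_le_left _ _)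
    have hμε : μ ≤ ε/2 := le_trans hμle (min_le_right _ _)
    have h1μ : (0:ℝ) < 1 - μ := by linarith
    set t := μ / ((1 - μ) * ε) with htdef
    have ht0 : 0 < t := by positivity
    have htle : t ≤ 2 * μ / ε := by
      rw [htdef, div_le_div_iff₀ (by positivity) hε]
      have h12 : (0:ℝ) ≤ 1 - 2 * μ := by linarith
      nlinarith [mul_nonneg (mul_nonneg hμ0.le hε.le) h12]
    have ht1 : t ≤ 1 := by
      have : 2 * μ / ε ≤ 1 := by
        rw [div_le_one hε]; linarith
      linarith
    set u : X := g + (μ / (1 - μ)) • (g - f) with hudef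
    -- bound on φ u
    have hcomb2 : (1 - t) • g + t • (g + ε • (g - f)) = u := by
      rw [hudef, htdef]
      match_scalars <;> field_simp <;> ring
    have hφu_le : φ u ≤ (((1 - t) * bg + t * C : ℝ) : EReal) := by
      have h2 := hconv g (g + ε • (g - f)) (1 - t) t (by linarith) ht0.le (by ring)
      rw [hcomb2] at h2
      rw [EReal.coe_add, EReal.coe_mul, EReal.coe_mul, hbgeq, hCeq]
      exact h2
    have hune : φ u ≠ ⊤ := ne_top_of_le_ne_top (EReal.coe_ne_top _) hφu_le
    set au := (φ u).toReal with haudef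
    have haueq : (au : EReal) = φ u := EReal.coe_toReal hune (hbot u)
    have hau_le : au ≤ (1 - t) * bg + t * C := by
      rw [← haueq] at hφu_le
      exact_mod_cast hφu_le
    -- the auxiliary sequence decreasing to f
    set kn : ℕ → X := fun n => f + μ⁻¹ • (gn n - g) with hkndef
    have hknval : ∀ n ω, (kn n : Ω → ℝ) ω
        = (f : Ω → ℝ) ω + μ⁻¹ * ((gn n : Ω → ℝ) ω - (g : Ω → ℝ) ω) := by
      intro n ω
      simp [hkndef]
    have hkanti : ∀ ω, Antitone fun n => (kn n : Ω → ℝ) ω := by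
      intro ω m n hmn
      simp only [hknval]
      have h := hganti ω hmn
      have hinv : (0:ℝ) ≤ μ⁻¹ := by positivity
      nlinarith
    have hktend : ∀ ω, Tendsto (fun n => (kn n : Ω → ℝ) ω) atTop (𝓝 ((f : Ω → ℝ) ω)) := by
      intro ω
      have h := (((hglim ω).sub_const ((g : Ω → ℝ) ω)).const_mul μ⁻¹).const_add
        ((f : Ω → ℝ) ω)
      simp only [sub_self, mul_zero, add_zero] at h
      simpa only [hknval] using h
    obtain ⟨hkA, hkT⟩ := hfcont kn hkanti hktend
    have hkinf : (⨅ n, φ (kn n)) = φ f :=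
      tendsto_nhds_unique (tendsto_atTop_iInf hkA) hkT
    have hexn : ∃ n, φ (kn n) < ((bf + μ : ℝ) : EReal) := by
      rw [← iInf_lt_iff, hkinf, ← hbfeq]
      exact_mod_cast lt_add_of_pos_right bf hμ0
    obtain ⟨n, hn⟩ := hexn
    have hkne : φ (kn n) ≠ ⊤ := (hn.trans (EReal.coe_lt_top _)).ne
    set ak := (φ (kn n)).toReal with hakdef
    have hakeq : (ak : EReal) = φ (kn n) := EReal.coe_toReal hkne (hbot _)
    have hak_lt : ak < bf + μ := by
      rw [← hakeq] at hn
      exact_mod_cast hn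
    -- main convexity step
    have hcomb : (1 - μ) • u + μ • kn n = gn n := by
      rw [hudef, hkndef]
      match_scalars <;> field_simp <;> ring
    have h1 : φ (gn n) ≤ ((1 - μ : ℝ) : EReal) * φ u + ((μ : ℝ) : EReal) * φ (kn n) := by
      have h := hconv u (kn n) (1 - μ) μ (by linarith) hμ0.le (by ring)
      rwa [hcomb] at h
    have h1' : φ (gn n) ≤ (((1 - μ) * au + μ * ak : ℝ) : EReal) := by
      rw [EReal.coe_add, EReal.coe_mul, EReal.coe_mul, haueq, hakeq]
      exact h1
    -- real arithmetic
    have hreal : (1 - μ) * au + μ * ak ≤ bg + μ * K := by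
      have e1 : (1 - μ) * au ≤ (1 - μ) * ((1 - t) * bg + t * C) :=
        mul_le_mul_of_nonneg_left hau_le h1μ.le
      have e2 : μ * ak ≤ μ * (bf + μ) := mul_le_mul_of_nonneg_left hak_lt.le hμ0.le
      have sub1 : (1 - μ) * bg ≤ bg + μ * |bg| := by
        nlinarith [mul_le_mul_of_nonneg_left (neg_abs_le bg) hμ0.le]
      have hs0 : (0:ℝ) ≤ (1 - μ) * t := by positivity
      have hsle : (1 - μ) * t ≤ 2 * μ / ε := by nlinarith
      have sub2 : (1 - μ) * t * (C - bg) ≤ 2 * μ / ε * |C - bg| := by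
        calc (1 - μ) * t * (C - bg) ≤ (1 - μ) * t * |C - bg| :=
              mul_le_mul_of_nonneg_left (le_abs_self _) hs0
          _ ≤ 2 * μ / ε * |C - bg| :=
              mul_le_mul_of_nonneg_right hsle (abs_nonneg _)
      have e3 : (1 - μ) * ((1 - t) * bg + t * C)
          ≤ bg + μ * |bg| + 2 * μ / ε * |C - bg| := by nlinarith [sub1, sub2]
      have e4 : μ * (bf + μ) ≤ μ * |bf| + μ := by
        nlinarith [mul_le_mul_of_nonneg_left (le_abs_self bf) hμ0.le]
      have hKexp : μ * K = μ * |bg| + 2 * μ / ε * |C - bg| + μ * |bf| + μ := by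
        rw [hKdef]; field_simp
      calc (1 - μ) * au + μ * ak
          ≤ (bg + μ * |bg| + 2 * μ / ε * |C - bg|) + (μ * |bf| + μ) :=
            add_le_add (e1.trans e3) (e2.trans e4)
        _ = bg + μ * K := by rw [hKexp]; ring
    calc L ≤ φ (gn n) := iInf_le _ n
      _ ≤ (((1 - μ) * au + μ * ak : ℝ) : EReal) := h1'
      _ ≤ ((bg + μ * K : ℝ) : EReal) := by exact_mod_cast hreal
  -- conclude
  have hμ₀ : (0:ℝ) < min (1/2) (ε/2) := lt_min (by norm_num) (by linarith)
  have hLne_top : L ≠ ⊤ :=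
    ne_top_of_le_ne_top (EReal.coe_ne_top _) (key _ hμ₀ le_rfl)
  have hLne_bot : L ≠ ⊥ := fun h => hbot g (le_bot_iff.mp (h ▸ hφgL))
  set lL := L.toReal with hlLdef
  have hLeq : (lL : EReal) = L := EReal.coe_toReal hLne_top hLne_bot
  have hfinal : lL ≤ bg := by
    apply le_of_forall_pos_le_add
    intro δ hδ
    have hKpos : (0:ℝ) < K := by linarith
    set μ := min (min (1/2) (ε/2)) (δ / K) with hμdef
    have hμpos : 0 < μ := lt_min hμ₀ (by positivity)
    have h1 := key μ hμpos (min_le_left _ _)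
    have h2 : lL ≤ bg + μ * K := by
      rw [← hLeq] at h1
      exact_mod_cast h1
    have h3 : μ * K ≤ δ := by
      have hμδ : μ ≤ δ / K := min_le_right _ _
      calc μ * K ≤ (δ / K) * K := mul_le_mul_of_nonneg_right hμδ hKpos.le
        _ = δ := by field_simp
    linarith
  have hbg_le : bg ≤ lL := by
    have h := hφgL
    rw [← hbgeq, ← hLeq] at h
    exact_mod_cast h
  have hLg : L = φ g := by
    rw [← hLeq, le_antisymm hfinal hbg_le, hbgeq]
  exact hLg ▸ hLt
end

section
/- Let X be a Stone vector lattice over a non-empty set Ω and φ : X → ℝ ∪ {+∞} an increasing convex functional. Suppose φ(f) = sup_{μ ∈ ca⁺(X)} (⟨f,μ⟩ − φ*_X(μ)) for all f ∈ I(φ). Then φ(fⁿ) ↑ φ(f) for each f ∈ I(φ) and every sequence (fⁿ) in X with fⁿ ↑ f (pointwise increasing convergence from below). -/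
open MeasureTheory Filter Topology Set

/-- The σ-algebra σ(X) generated by a family X of real-valued functions on Ω. -/
def sigmaGen {Ω : Type*} (X : Set (Ω → ℝ)) : MeasurableSpace Ω :=
  ⨆ f ∈ X, MeasurableSpace.comap f inferInstance

/-- ca⁺(X): countably additive nonnegative measures on σ(X) integrating every
nonnegative element of X finitely. -/
def caPos {Ω : Type*} (X : Set (Ω → ℝ)) : Set (@Measure Ω (sigmaGen X)) :=
  {μ | ∀ f ∈ X, (∀ ω, 0 ≤ f ω) → (∫⁻ ω, ENNReal.ofReal (f ω) ∂μ) < ⊤}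

/-- The convex conjugate φ*_X on measures in ca⁺(X). -/
noncomputable def caConj {Ω : Type*} (X : Submodule ℝ (Ω → ℝ)) (φ : X → EReal)
    (μ : @Measure Ω (sigmaGen (X : Set (Ω → ℝ)))) : EReal :=
  ⨆ g : X, ((∫ ω, (g : Ω → ℝ) ω ∂μ : ℝ) : EReal) - φ g

/-
For `f ∈ I(φ)` and any `μ ∈ ca⁺(X)`, the definition of `φ*_X` gives
`⟨fⁿ, μ⟩ - φ*_X(μ) ≤ φ(fⁿ) ≤ supₙ φ(fⁿ)`, and by monotone convergence `⟨fⁿ, μ⟩ → ⟨f, μ⟩`.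
Hence every term of the dual representation of `φ(f)` is bounded by `supₙ φ(fⁿ)`, so
`φ(f) ≤ supₙ φ(fⁿ)`; the reverse inequality and the monotonicity of `φ(fⁿ)` follow from `φ`
being increasing.
-/

namespace EReal

lemma coe_sub_le_comm {a : ℝ} {b c : EReal} (h : (a : EReal) - b ≤ c) : (a : EReal) - c ≤ b := by
  induction b with
  | bot =>
    rw [sub_bot (coe_ne_bot a), top_le_iff] at h
    simp [h]
  | coe b =>
    exact sub_le_of_le_add' ((sub_le_iff_le_add (.inl (coe_ne_bot b)) (.inl (coe_ne_top b))).1 h)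
  | top => exact le_top

lemma tendsto_coe_sub_const {ι : Type*} {l : Filter ι} {x : ι → ℝ} {a : ℝ}
    (hx : Tendsto x l (𝓝 a)) (c : EReal) :
    Tendsto (fun i => (x i : EReal) - c) l (𝓝 ((a : EReal) - c)) := by
  have hadd := continuousAt_add (p := ((a : EReal), -c)) (.inl (coe_ne_top a)) (.inl (coe_ne_bot a))
  exact hadd.tendsto.comp
    (((continuous_coe_real_ereal.tendsto a).comp hx).prodMk_nhds tendsto_const_nhds)

end EReal

lemma Submodule.abs_mem_of_inf_mem {Ω : Type*} (X : Submodule ℝ (Ω → ℝ))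
    (hXinf : ∀ f ∈ X, ∀ g ∈ X, f ⊓ g ∈ X) {f : Ω → ℝ} (hf : f ∈ X) : |f| ∈ X := by
  have habs : |f| = -((-f) ⊓ f) := by
    ext ω
    simp only [Pi.abs_apply, Pi.neg_apply, Pi.inf_apply, ← max_neg_neg, neg_neg]
    exact abs_eq_max_neg
  rw [habs]
  exact X.neg_mem (hXinf _ (X.neg_mem hf) _ hf)

section sigmaGen

variable {Ω : Type*}

lemma measurable_sigmaGen {X : Set (Ω → ℝ)} {f : Ω → ℝ} (hf : f ∈ X) :
    Measurable[sigmaGen X] f :=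
  measurable_iff_comap_le.2 <| le_iSup₂ (f := fun g (_ : g ∈ X) => MeasurableSpace.comap g _) f hf

lemma integrable_of_mem_caPos (X : Submodule ℝ (Ω → ℝ))
    (hXinf : ∀ f ∈ X, ∀ g ∈ X, f ⊓ g ∈ X) {f : Ω → ℝ} (hf : f ∈ X)
    {μ : @Measure Ω (sigmaGen (X : Set (Ω → ℝ)))} (hμ : μ ∈ caPos (X : Set (Ω → ℝ))) :
    Integrable[sigmaGen (X : Set (Ω → ℝ))] f μ := by
  refine ⟨(measurable_sigmaGen (X := (X : Set (Ω → ℝ))) hf).aestronglyMeasurable, ?_⟩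
  simpa only [HasFiniteIntegral, Real.enorm_eq_ofReal_abs, Pi.abs_apply]
    using hμ _ (X.abs_mem_of_inf_mem hXinf hf) fun ω => abs_nonneg (f ω)

lemma integral_sub_caConj_le (X : Submodule ℝ (Ω → ℝ)) (φ : X → EReal)
    (μ : @Measure Ω (sigmaGen (X : Set (Ω → ℝ)))) (g : X) :
    ((∫ ω, (g : Ω → ℝ) ω ∂μ : ℝ) : EReal) - caConj X φ μ ≤ φ g :=
  EReal.coe_sub_le_comm <|
    le_iSup (fun g : X => ((∫ ω, (g : Ω → ℝ) ω ∂μ : ℝ) : EReal) - φ g) g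

lemma tendsto_integral_of_monotone_of_mem_caPos (X : Submodule ℝ (Ω → ℝ))
    (hXinf : ∀ f ∈ X, ∀ g ∈ X, f ⊓ g ∈ X) {fn : ℕ → Ω → ℝ} {f : Ω → ℝ}
    (hfn : ∀ n, fn n ∈ X) (hf : f ∈ X) (hmono : ∀ ω, Monotone fun n => fn n ω)
    (hlim : ∀ ω, Tendsto (fun n => fn n ω) atTop (𝓝 (f ω)))
    {μ : @Measure Ω (sigmaGen (X : Set (Ω → ℝ)))} (hμ : μ ∈ caPos (X : Set (Ω → ℝ))) :
    Tendsto (fun n => ∫ ω, fn n ω ∂μ) atTop (𝓝 (∫ ω, f ω ∂μ)) :=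
  integral_tendsto_of_tendsto_of_monotone
    (fun n => integrable_of_mem_caPos X hXinf (hfn n) hμ) (integrable_of_mem_caPos X hXinf hf hμ)
    (ae_of_all _ hmono) (ae_of_all _ hlim)

end sigmaGen

theorem stmt3_general {Ω : Type*} (X : Submodule ℝ (Ω → ℝ))
    (hXinf : ∀ f ∈ X, ∀ g ∈ X, f ⊓ g ∈ X)
    (φ : X → EReal)
    (hmono : ∀ f g : X, (∀ ω, (g : Ω → ℝ) ω ≤ (f : Ω → ℝ) ω) → φ g ≤ φ f)
    (hyp : ∀ f : X,
      (φ f < ⊤ ∧ ∀ g : X, ∃ ε > (0 : ℝ), ∀ lam : ℝ, 0 ≤ lam → lam ≤ ε →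
        φ (f + lam • g) < ⊤) →
      φ f = ⨆ μ ∈ caPos (X : Set (Ω → ℝ)),
        ((∫ ω, (f : Ω → ℝ) ω ∂μ : ℝ) : EReal) - caConj X φ μ) :
    ∀ f : X,
      (φ f < ⊤ ∧ ∀ g : X, ∃ ε > (0 : ℝ), ∀ lam : ℝ, 0 ≤ lam → lam ≤ ε →
        φ (f + lam • g) < ⊤) →
      ∀ fn : ℕ → X, (∀ ω, Monotone fun n => (fn n : Ω → ℝ) ω) →
        (∀ ω, Tendsto (fun n => (fn n : Ω → ℝ) ω) atTop (𝓝 ((f : Ω → ℝ) ω))) →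
        (Monotone fun n => φ (fn n)) ∧ Tendsto (fun n => φ (fn n)) atTop (𝓝 (φ f)) := by
  intro f hf fn hfn_mono hfn_lim
  have hφ_mono : Monotone fun n => φ (fn n) :=
    fun m n hmn => hmono _ _ fun ω => hfn_mono ω hmn
  refine ⟨hφ_mono, ?_⟩
  suffices φ f = ⨆ n, φ (fn n) from this ▸ tendsto_atTop_iSup hφ_mono
  have hfn_le : ∀ n ω, (fn n : Ω → ℝ) ω ≤ (f : Ω → ℝ) ω :=
    fun n ω => (hfn_mono ω).ge_of_tendsto (hfn_lim ω) n
  refine le_antisymm ?_ (iSup_le fun n => hmono _ _ (hfn_le n))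
  rw [hyp f hf]
  refine iSup₂_le fun μ hμ => ?_
  have hintegral := tendsto_integral_of_monotone_of_mem_caPos X hXinf (fun n => (fn n).2) f.2
    hfn_mono hfn_lim hμ
  exact le_of_tendsto' (EReal.tendsto_coe_sub_const hintegral _) fun n =>
    (integral_sub_caConj_le X φ μ (fn n)).trans (le_iSup (fun n => φ (fn n)) n)

/-- Proposition 1.1 (v) ⇒ (vi): if an increasing convex functional on a Stone vector lattice
admits a sup-representation over ca⁺(X) on the algebraic interior of its domain, then it is
continuous along sequences increasing to elements of the algebraic interior. -/
theorem stmt3 {Ω : Type*} [Nonempty Ω] (X : Submodule ℝ (Ω → ℝ))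
    (hXinf : ∀ f ∈ X, ∀ g ∈ X, f ⊓ g ∈ X)
    (hXone : ∀ f ∈ X, f ⊓ 1 ∈ X)
    (φ : X → EReal) (hbot : ∀ f, φ f ≠ ⊥)
    (hmono : ∀ f g : X, (∀ ω, (g : Ω → ℝ) ω ≤ (f : Ω → ℝ) ω) → φ g ≤ φ f)
    (hconv : ∀ f g : X, ∀ a b : ℝ, 0 ≤ a → 0 ≤ b → a + b = 1 →
      φ (a • f + b • g) ≤ (a : EReal) * φ f + (b : EReal) * φ g)
    (hyp : ∀ f : X,
      (φ f < ⊤ ∧ ∀ g : X, ∃ ε > (0 : ℝ), ∀ lam : ℝ, 0 ≤ lam → lam ≤ ε →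
        φ (f + lam • g) < ⊤) →
      φ f = ⨆ μ ∈ caPos (X : Set (Ω → ℝ)),
        ((∫ ω, (f : Ω → ℝ) ω ∂μ : ℝ) : EReal) - caConj X φ μ) :
    ∀ f : X,
      (φ f < ⊤ ∧ ∀ g : X, ∃ ε > (0 : ℝ), ∀ lam : ℝ, 0 ≤ lam → lam ≤ ε →
        φ (f + lam • g) < ⊤) →
      ∀ fn : ℕ → X, (∀ ω, Monotone fun n => (fn n : Ω → ℝ) ω) →
        (∀ ω, Tendsto (fun n => (fn n : Ω → ℝ) ω) atTop (𝓝 ((f : Ω → ℝ) ω))) →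
        (Monotone fun n => φ (fn n)) ∧ Tendsto (fun n => φ (fn n)) atTop (𝓝 (φ f)) :=
  stmt3_general X hXinf φ hmono hyp
end

section
/- Let X be a family of continuous functions f : Ω → ℝ on a topological space Ω and let σ(X) be the smallest σ-algebra on Ω making all f ∈ X measurable. Then every finite measure μ on σ(X) is closed regular, i.e. μ(A) = sup{μ(B) : B ∈ σ(X), B closed, B ⊆ A} for all A ∈ σ(X). -/
/-!
Call `A` closed-approximable if for every `ε > 0` it contains a closed measurable `F` with
`μ (A \ F) ≤ ε`. For a finite measure, the sets `A` with both `A` and `Aᶜ` closed-approximable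
form a σ-algebra: an intersection is approximated by the intersection of the approximations, a
countable union by an approximation of a large enough finite partial union. Each generator
`f ⁻¹' t` of `σ(X)` belongs to it, since the image measure `μ.map f` on `ℝ` is weakly regular and
preimages of closed sets under the continuous `f` are closed.
-/

open MeasureTheory Set ENNReal

theorem measurable_of_mem_sigmaGen {Ω : Type*} {X : Set (Ω → ℝ)} {f : Ω → ℝ} (hf : f ∈ X) :
    Measurable[sigmaGen X] f :=
  measurable_iff_comap_le.2 <| le_iSup₂ (f := fun f (_ : f ∈ X) => MeasurableSpace.comap f _) f hf

namespace MeasureTheory.Measure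

variable {Ω : Type*} [TopologicalSpace Ω] {m : MeasurableSpace Ω} (μ : Measure Ω)

def ClosedApproximable (A : Set Ω) : Prop :=
  ∀ ε ≠ (0 : ℝ≥0∞), ∃ F ⊆ A, MeasurableSet F ∧ IsClosed F ∧ μ (A \ F) ≤ ε

variable {μ}

theorem closedApproximable_empty : μ.ClosedApproximable ∅ :=
  fun _ _ => ⟨∅, subset_rfl, .empty, isClosed_empty, by simp⟩

theorem closedApproximable_univ : μ.ClosedApproximable univ :=
  fun _ _ => ⟨univ, subset_rfl, .univ, isClosed_univ, by simp⟩

namespace ClosedApproximable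

variable {A B : Set Ω}

theorem union (hA : μ.ClosedApproximable A) (hB : μ.ClosedApproximable B) :
    μ.ClosedApproximable (A ∪ B) := by
  intro ε hε
  have hε2 : ε / 2 ≠ 0 := (ENNReal.half_pos hε).ne'
  obtain ⟨F, hFA, hFm, hFc, hμF⟩ := hA _ hε2
  obtain ⟨G, hGB, hGm, hGc, hμG⟩ := hB _ hε2
  refine ⟨F ∪ G, union_subset_union hFA hGB, hFm.union hGm, hFc.union hGc, ?_⟩
  calc μ ((A ∪ B) \ (F ∪ G)) ≤ μ (A \ F ∪ B \ G) := measure_mono fun x hx => by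
        simp only [Set.mem_sdiff, mem_union] at hx ⊢; tauto
    _ ≤ μ (A \ F) + μ (B \ G) := measure_union_le _ _
    _ ≤ ε / 2 + ε / 2 := add_le_add hμF hμG
    _ = ε := ENNReal.add_halves ε

theorem accumulate {A : ℕ → Set Ω} (hA : ∀ n, μ.ClosedApproximable (A n)) (N : ℕ) :
    μ.ClosedApproximable (Set.accumulate A N) := by
  induction N with
  | zero => simpa using hA 0
  | succ N ih => simpa only [accumulate_succ] using ih.union (hA (N + 1))

theorem iInter {A : ℕ → Set Ω} (hA : ∀ n, μ.ClosedApproximable (A n)) :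
    μ.ClosedApproximable (⋂ n, A n) := by
  intro ε hε
  obtain ⟨δ, hδ, hδε⟩ := ENNReal.exists_pos_sum_of_countable' hε ℕ
  choose F hFA hFm hFc hμF using fun n => hA n (δ n) (hδ n).ne'
  refine ⟨⋂ n, F n, iInter_mono hFA, .iInter hFm, isClosed_iInter hFc, ?_⟩
  calc μ ((⋂ n, A n) \ ⋂ n, F n) ≤ μ (⋃ n, A n \ F n) := by
        rw [sdiff_iInter]
        exact measure_mono (iUnion_mono fun n => sdiff_subset_sdiff_left (iInter_subset A n))
    _ ≤ ∑' n, μ (A n \ F n) := measure_iUnion_le _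
    _ ≤ ∑' n, δ n := ENNReal.tsum_le_tsum hμF
    _ ≤ ε := hδε.le

theorem iUnion [IsFiniteMeasure μ] {A : ℕ → Set Ω} (hA : ∀ n, μ.ClosedApproximable (A n)) :
    μ.ClosedApproximable (⋃ n, A n) := by
  intro ε hε
  have hε2 : ε / 2 ≠ 0 := (ENNReal.half_pos hε).ne'
  obtain ⟨N, hN⟩ : ∃ N, μ (⋃ n, A n) < μ (Set.accumulate A N) + ε / 2 :=
    ((tendsto_measure_iUnion_accumulate.add tendsto_const_nhds).eventually_const_lt
      (ENNReal.lt_add_right (measure_ne_top μ _) hε2)).exists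
  obtain ⟨F, hFA, hFm, hFc, hμF⟩ := accumulate hA N _ hε2
  refine ⟨F, hFA.trans (accumulate_subset_iUnion N), hFm, hFc, ?_⟩
  rw [measure_sdiff_le_iff_le_add hFm.nullMeasurableSet
    (hFA.trans (accumulate_subset_iUnion N)) (measure_ne_top μ _)]
  rw [measure_sdiff_le_iff_le_add hFm.nullMeasurableSet hFA (measure_ne_top μ _)] at hμF
  calc μ (⋃ n, A n) ≤ μ (Set.accumulate A N) + ε / 2 := hN.le
    _ ≤ μ F + ε / 2 + ε / 2 := add_le_add_left hμF _
    _ = μ F + ε := by rw [add_assoc, ENNReal.add_halves]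

theorem measure_eq_iSup (hA : μ.ClosedApproximable A) :
    μ A = ⨆ B ∈ {B : Set Ω | MeasurableSet B ∧ IsClosed B ∧ B ⊆ A}, μ B := by
  refine le_antisymm ?_ (iSup₂_le fun B hB => measure_mono hB.2.2)
  refine ENNReal.le_of_forall_pos_le_add fun ε hε _ => ?_
  obtain ⟨F, hFA, hFm, hFc, hμF⟩ := hA ε (by exact_mod_cast hε.ne')
  calc μ A ≤ μ (A \ F) + μ F := tsub_le_iff_right.1 le_measure_sdiff
    _ ≤ ε + ⨆ B ∈ {B : Set Ω | MeasurableSet B ∧ IsClosed B ∧ B ⊆ A}, μ B :=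
      add_le_add hμF (le_iSup₂_of_le F ⟨hFm, hFc, hFA⟩ le_rfl)
    _ = _ := add_comm _ _

end ClosedApproximable

theorem closedApproximable_preimage [IsFiniteMeasure μ] {Y : Type*} [TopologicalSpace Y]
    [TopologicalSpace.PseudoMetrizableSpace Y] [MeasurableSpace Y] [BorelSpace Y] {f : Ω → Y}
    (hfc : Continuous f) (hfm : Measurable f) {t : Set Y} (ht : MeasurableSet t) :
    μ.ClosedApproximable (f ⁻¹' t) := by
  intro ε hε
  obtain ⟨C, hCt, hC, hμC⟩ := ht.exists_isClosed_sdiff_lt (μ := μ.map f) (measure_ne_top _ _) hε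
  refine ⟨f ⁻¹' C, preimage_mono hCt, hfm hC.measurableSet, hC.preimage hfc, ?_⟩
  rw [← preimage_sdiff, ← map_apply hfm (ht.diff hC.measurableSet)]
  exact hμC.le

variable (μ) in
def closedApproximableSets [IsFiniteMeasure μ] : MeasurableSpace Ω where
  MeasurableSet' A := μ.ClosedApproximable A ∧ μ.ClosedApproximable Aᶜ
  measurableSet_empty := ⟨closedApproximable_empty, by simpa using closedApproximable_univ⟩
  measurableSet_compl A hA := ⟨hA.2, by simpa using hA.1⟩
  measurableSet_iUnion A hA :=
    ⟨.iUnion fun n => (hA n).1, by simpa only [compl_iUnion] using .iInter fun n => (hA n).2⟩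

theorem comap_le_closedApproximableSets [IsFiniteMeasure μ] {Y : Type*} [TopologicalSpace Y]
    [TopologicalSpace.PseudoMetrizableSpace Y] [MeasurableSpace Y] [BorelSpace Y] {f : Ω → Y}
    (hfc : Continuous f) (hfm : Measurable f) :
    MeasurableSpace.comap f inferInstance ≤ μ.closedApproximableSets := by
  rintro _ ⟨t, ht, rfl⟩
  exact ⟨closedApproximable_preimage hfc hfm ht, closedApproximable_preimage hfc hfm ht.compl⟩

end MeasureTheory.Measure

/-- Proposition 1.5, first part: every finite measure on the σ-algebra generated by a family
of continuous real-valued functions on a topological space is closed regular. -/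
theorem stmt7 {Ω : Type*} [TopologicalSpace Ω] (X : Set (Ω → ℝ))
    (hXcont : ∀ f ∈ X, Continuous f)
    (μ : @Measure Ω (sigmaGen X)) (hfin : IsFiniteMeasure μ) :
    ∀ A : Set Ω, MeasurableSet[sigmaGen X] A →
      μ A = ⨆ B ∈ {B : Set Ω | MeasurableSet[sigmaGen X] B ∧ IsClosed B ∧ B ⊆ A}, μ B := by
  intro A hA
  have hle : sigmaGen X ≤ μ.closedApproximableSets := iSup₂_le fun f hf =>
    Measure.comap_le_closedApproximableSets (hXcont f hf) (measurable_of_mem_sigmaGen hf)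
  exact (hle A hA).1.measure_eq_iSup
end

section
/- Let X be a family of continuous functions f : Ω → ℝ on a topological space Ω and let σ(X) be the smallest σ-algebra on Ω making all f ∈ X measurable. If μ is a finite measure on σ(X) and there exists a sequence (K_n) of compact sets in σ(X) such that μ(K_n) → μ(Ω), then μ is regular, i.e. μ(A) = sup{μ(B) : B ∈ σ(X), B closed and compact, B ⊆ A} for all A ∈ σ(X). -/
open MeasureTheory Filter Topology Set
open scoped ENNReal NNReal

lemma sigmaGen_eq_comap {Ω : Type*} (X : Set (Ω → ℝ)) :
    sigmaGen X = MeasurableSpace.comap (fun ω (f : X) => (f : Ω → ℝ) ω) MeasurableSpace.pi := by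
  rw [MeasurableSpace.pi, MeasurableSpace.comap_iSup]
  simp_rw [MeasurableSpace.comap_comp]
  rw [sigmaGen, iSup_subtype']
  rfl

lemma isClosed_of_cm {Ω : Type*} [TopologicalSpace Ω] {X : Set (Ω → ℝ)}
    (hXcont : ∀ f ∈ X, Continuous f) {A : Set Ω}
    (hA : MeasurableSet[sigmaGen X] A) (hAc : IsCompact A) : IsClosed A := by
  set e : Ω → (X → ℝ) := fun ω f => (f : Ω → ℝ) ω with he_def
  have he : Continuous e := continuous_pi fun f => hXcont f f.2
  rw [sigmaGen_eq_comap] at hA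
  obtain ⟨S, -, rfl⟩ := hA
  have h1 : e ⁻¹' (e '' (e ⁻¹' S)) = e ⁻¹' S :=
    subset_antisymm (preimage_mono (image_preimage_subset e S)) (subset_preimage_image _ _)
  rw [← h1]
  exact ((hAc.image he).isClosed).preimage he

lemma inner_closed {Ω : Type*} [TopologicalSpace Ω] {X : Set (Ω → ℝ)}
    (hXcont : ∀ f ∈ X, Continuous f) (μ : @Measure Ω (sigmaGen X))
    (hfin : IsFiniteMeasure μ) {A : Set Ω} (hA : MeasurableSet[sigmaGen X] A) :
    ∀ ε : ℝ≥0∞, 0 < ε → ∃ F, IsClosed F ∧ MeasurableSet[sigmaGen X] F ∧ F ⊆ A ∧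
      μ (A \ F) ≤ ε := by
  letI := sigmaGen X
  haveI := hfin
  set P : Set Ω → Prop := fun A => ∀ ε : ℝ≥0∞, 0 < ε →
    ∃ F, IsClosed F ∧ MeasurableSet F ∧ F ⊆ A ∧ μ (A \ F) ≤ ε with hPdef
  suffices h : MeasurableSet A ∧ P A ∧ P Aᶜ from h.2.1
  have hself : ∀ B : Set Ω, IsClosed B → MeasurableSet B → P B := by
    intro B hBc hBm ε hε
    exact ⟨B, hBc, hBm, le_rfl, by simp⟩
  -- the good sets form a σ-algebra
  let m' : MeasurableSpace Ω :=
    { MeasurableSet' := fun A => MeasurableSet A ∧ P A ∧ P Aᶜ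
      measurableSet_empty := by
        refine ⟨MeasurableSet.empty, hself ∅ isClosed_empty MeasurableSet.empty, ?_⟩
        simpa using hself univ isClosed_univ MeasurableSet.univ
      measurableSet_compl := by
        intro s hs
        exact ⟨hs.1.compl, hs.2.2, by simpa using hs.2.1⟩
      measurableSet_iUnion := by
        intro s hs
        have hsm : ∀ i, MeasurableSet (s i) := fun i => (hs i).1
        refine ⟨MeasurableSet.iUnion hsm, ?_, ?_⟩
        · -- union case: finite stage + finitely many approximations
          intro ε hε
          have hhalf : (0 : ℝ≥0∞) < ε / 2 := ENNReal.div_pos hε.ne' (by norm_num)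
          -- finite stage
          set T : ℕ → Set Ω := fun N => (⋃ i, s i) \ ⋃ i ∈ Finset.range (N + 1), s i with hT
          have hTm : ∀ N, MeasurableSet (T N) :=
            fun N => (MeasurableSet.iUnion hsm).diff
              (Finset.measurableSet_biUnion _ fun i _ => hsm i)
          have hTanti : Antitone T := by
            intro a b hab
            refine diff_subset_diff_right fun x hx => ?_
            obtain ⟨i, hi, hxi⟩ := mem_iUnion₂.1 hx
            exact mem_iUnion₂.2 ⟨i, Finset.mem_range.2
              (by have := Finset.mem_range.1 hi; omega), hxi⟩
          have hTinter : ⋂ N, T N = ∅ := by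
            refine eq_empty_iff_forall_notMem.2 fun ω hω => ?_
            have h0 := mem_iInter.1 hω
            obtain ⟨i, hi⟩ := mem_iUnion.1 (h0 0).1
            exact (h0 i).2 (mem_iUnion₂.2 ⟨i, Finset.self_mem_range_succ i, hi⟩)
          have htend : Tendsto (μ ∘ T) atTop (𝓝 (μ (⋂ N, T N))) :=
            tendsto_measure_iInter_atTop (fun N => (hTm N).nullMeasurableSet) hTanti
              ⟨0, measure_ne_top μ _⟩
          rw [hTinter, measure_empty] at htend
          obtain ⟨N, hN⟩ := (htend.eventually_lt_const hhalf).exists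
          -- approximate each s i, i ≤ N
          set δ : ℝ≥0∞ := ε / 2 / (N + 1) with hδ
          have hδpos : 0 < δ := ENNReal.div_pos hhalf.ne' (by simp [ENNReal.natCast_ne_top])
          choose F hFc hFm hFs hFμ using fun i => (hs i).2.1 δ hδpos
          refine ⟨⋃ i ∈ Finset.range (N + 1), F i,
            isClosed_biUnion_finset fun i _ => hFc i,
            Finset.measurableSet_biUnion _ fun i _ => hFm i,
            iUnion₂_subset fun i _ => (hFs i).trans (subset_iUnion s i), ?_⟩
          have hsplit : (⋃ i, s i) \ (⋃ i ∈ Finset.range (N + 1), F i) ⊆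
              T N ∪ ⋃ i ∈ Finset.range (N + 1), (s i \ F i) := by
            intro ω hω
            rcases Classical.em (ω ∈ ⋃ i ∈ Finset.range (N + 1), s i) with h | h
            · right
              obtain ⟨i, hi, hωi⟩ := mem_iUnion₂.1 h
              exact mem_iUnion₂.2 ⟨i, hi, hωi, fun hc => hω.2 (mem_iUnion₂.2 ⟨i, hi, hc⟩)⟩
            · exact Or.inl ⟨hω.1, h⟩
          calc μ ((⋃ i, s i) \ ⋃ i ∈ Finset.range (N + 1), F i)
              ≤ μ (T N ∪ ⋃ i ∈ Finset.range (N + 1), (s i \ F i)) := measure_mono hsplit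
            _ ≤ μ (T N) + μ (⋃ i ∈ Finset.range (N + 1), (s i \ F i)) := measure_union_le _ _
            _ ≤ ε / 2 + ∑ i ∈ Finset.range (N + 1), μ (s i \ F i) := by
                gcongr
                exacts [hN.le, measure_biUnion_finset_le _ _]
            _ ≤ ε / 2 + ∑ _i ∈ Finset.range (N + 1), δ := by gcongr; exact hFμ _
            _ = ε / 2 + (N + 1) * δ := by
                rw [Finset.sum_const, Finset.card_range]; simp [nsmul_eq_mul]
            _ ≤ ε / 2 + ε / 2 := by
                gcongr
                simpa [hδ] using ENNReal.mul_div_le (a := ((N : ℝ≥0∞) + 1)) (b := ε / 2)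
            _ = ε := ENNReal.add_halves ε
        · -- complement case: countable intersection, geometric series
          intro ε hε
          rw [compl_iUnion]
          set δ : ℕ → ℝ≥0∞ := fun i => ε / 2 / 2 ^ i with hδ
          have hδpos : ∀ i, 0 < δ i := fun i =>
            ENNReal.div_pos (ENNReal.div_pos hε.ne' (by norm_num)).ne'
              (by simp [ENNReal.pow_ne_top])
          choose F hFc hFm hFs hFμ using fun i => (hs i).2.2 (δ i) (hδpos i)
          refine ⟨⋂ i, F i, isClosed_iInter hFc, MeasurableSet.iInter hFm,
            iInter_mono hFs, ?_⟩
          have hsub : (⋂ i, (s i)ᶜ) \ ⋂ i, F i ⊆ ⋃ i, ((s i)ᶜ \ F i) := by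
            intro ω hω
            obtain ⟨i, hi⟩ : ∃ i, ω ∉ F i := by
              by_contra h
              push_neg at h
              exact hω.2 (mem_iInter.2 h)
            exact mem_iUnion.2 ⟨i, mem_iInter.1 hω.1 i, hi⟩
          calc μ ((⋂ i, (s i)ᶜ) \ ⋂ i, F i) ≤ μ (⋃ i, ((s i)ᶜ \ F i)) := measure_mono hsub
            _ ≤ ∑' i, μ ((s i)ᶜ \ F i) := measure_iUnion_le _
            _ ≤ ∑' i, δ i := ENNReal.tsum_le_tsum hFμ
            _ ≤ ε := by
                rw [hδ]
                have : ∀ i : ℕ, ε / 2 / 2 ^ i = ε / 2 * 2⁻¹ ^ i := by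
                  intro i
                  rw [div_eq_mul_inv, ENNReal.inv_pow]
                rw [tsum_congr this, ENNReal.tsum_mul_left, ENNReal.tsum_geometric]
                have h2 : ((1 : ℝ≥0∞) - 2⁻¹)⁻¹ = 2 := by
                  rw [ENNReal.one_sub_inv_two, inv_inv]
                rw [h2, ENNReal.div_mul_cancel (by norm_num) (by norm_num)] }
  -- the generators lie in m'
  have hle : sigmaGen X ≤ m' := by
    rw [sigmaGen]
    refine iSup₂_le fun f hf => ?_
    have hgen : (inferInstance : MeasurableSpace ℝ) =
        MeasurableSpace.generateFrom (range Iic) := by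
      rw [BorelSpace.measurable_eq (α := ℝ), borel_eq_generateFrom_Iic]
    rw [hgen, MeasurableSpace.comap_generateFrom]
    refine MeasurableSpace.generateFrom_le ?_
    rintro t ⟨u, ⟨a, rfl⟩, rfl⟩
    have hfc := hXcont f hf
    have hmIic : ∀ b : ℝ, MeasurableSet[sigmaGen X] (f ⁻¹' Iic b) := fun b =>
      le_iSup₂ (f := fun (f : Ω → ℝ) (_ : f ∈ X) => MeasurableSpace.comap f inferInstance) f hf
        _ ⟨Iic b, measurableSet_Iic, rfl⟩
    have hmIci : ∀ b : ℝ, MeasurableSet[sigmaGen X] (f ⁻¹' Ici b) := fun b =>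
      le_iSup₂ (f := fun (f : Ω → ℝ) (_ : f ∈ X) => MeasurableSpace.comap f inferInstance) f hf
        _ ⟨Ici b, measurableSet_Ici, rfl⟩
    show MeasurableSet[sigmaGen X] (f ⁻¹' Iic a) ∧ P (f ⁻¹' Iic a) ∧ P (f ⁻¹' Iic a)ᶜ
    refine ⟨hmIic a, hself _ (isClosed_Iic.preimage hfc) (hmIic a), ?_⟩
    -- complement : f ⁻¹' (Ioi a), approximated by f ⁻¹' (Ici (a + 1/(n+1)))
    intro ε hε
    set G : ℕ → Set Ω := fun n => (f ⁻¹' Iic a)ᶜ \ f ⁻¹' Ici (a + 1 / (n + 1)) with hG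
    have hGm : ∀ n, MeasurableSet[sigmaGen X] (G n) := fun n => (hmIic a).compl.diff (hmIci _)
    have hGanti : Antitone G := by
      intro m n hmn
      refine diff_subset_diff_right (preimage_mono (Ici_subset_Ici.2 ?_))
      have : (1 : ℝ) / (n + 1) ≤ 1 / (m + 1) := by
        apply one_div_le_one_div_of_le (by positivity)
        exact_mod_cast Nat.succ_le_succ hmn
      linarith
    have hGinter : ⋂ n, G n = ∅ := by
      refine eq_empty_iff_forall_notMem.2 fun ω hω => ?_
      have h0 := mem_iInter.1 hω
      have hfa : a < f ω := not_le.1 (h0 0).1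
      obtain ⟨n, hn⟩ := exists_nat_one_div_lt (sub_pos.2 hfa)
      refine (h0 n).2 ?_
      show a + 1 / (n + 1) ≤ f ω
      have : (1 : ℝ) / (n + 1) < f ω - a := hn
      linarith
    have htend : Tendsto (μ ∘ G) atTop (𝓝 (μ (⋂ n, G n))) :=
      tendsto_measure_iInter_atTop (fun n => (hGm n).nullMeasurableSet) hGanti
        ⟨0, measure_ne_top μ _⟩
    rw [hGinter, measure_empty] at htend
    obtain ⟨n, hn⟩ := (htend.eventually_lt_const hε).exists
    refine ⟨f ⁻¹' Ici (a + 1 / (n + 1)), isClosed_Ici.preimage hfc, hmIci _, ?_, hn.le⟩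
    intro ω hω
    have hω' : a + 1 / (n + 1) ≤ f ω := hω
    show ¬ f ω ≤ a
    push_neg
    have hpos : (0 : ℝ) < 1 / (n + 1) := by positivity
    linarith
  exact hle A hA

/-- Proposition 1.5, second part: if a finite measure on the σ-algebra generated by a family
of continuous real-valued functions is exhausted by a sequence of compact measurable sets,
then it is regular (inner regular by closed compact sets). -/
theorem stmt8 {Ω : Type*} [TopologicalSpace Ω] (X : Set (Ω → ℝ))
    (hXcont : ∀ f ∈ X, Continuous f)
    (μ : @Measure Ω (sigmaGen X)) (hfin : IsFiniteMeasure μ)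
    (K : ℕ → Set Ω) (hK : ∀ n, IsCompact (K n) ∧ MeasurableSet[sigmaGen X] (K n))
    (hKlim : Tendsto (fun n => μ (K n)) atTop (𝓝 (μ Set.univ))) :
    ∀ A : Set Ω, MeasurableSet[sigmaGen X] A →
      μ A = ⨆ B ∈ {B : Set Ω | MeasurableSet[sigmaGen X] B ∧ IsClosed B ∧ IsCompact B ∧
        B ⊆ A}, μ B := by
  letI := sigmaGen X
  haveI := hfin
  intro A hA
  refine le_antisymm ?_ (iSup₂_le fun B hB => measure_mono hB.2.2.2)
  refine ENNReal.le_of_forall_pos_le_add fun ε hε _ => ?_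
  have hhalf : (0 : ℝ≥0∞) < (ε : ℝ≥0∞) / 2 :=
    ENNReal.div_pos (by exact_mod_cast hε.ne') (by norm_num)
  obtain ⟨F, hFcl, hFm, hFA, hFμ⟩ := inner_closed hXcont μ hfin hA ((ε : ℝ≥0∞) / 2) hhalf
  -- pick n with μ univ ≤ μ (K n) + ε/2
  obtain ⟨n, hn⟩ : ∃ n, μ univ ≤ μ (K n) + (ε : ℝ≥0∞) / 2 := by
    rcases eq_or_ne (μ univ) 0 with h0 | h0
    · exact ⟨0, by simp [h0]⟩
    · have hlt : μ univ - (ε : ℝ≥0∞) / 2 < μ univ :=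
        ENNReal.sub_lt_self (measure_ne_top μ _) h0 hhalf.ne'
      obtain ⟨n, hn⟩ := (hKlim.eventually_const_lt hlt).exists
      exact ⟨n, tsub_le_iff_right.1 hn.le⟩
  have hKμ : μ (univ \ K n) ≤ (ε : ℝ≥0∞) / 2 := by
    rw [measure_diff (subset_univ _) (hK n).2.nullMeasurableSet (measure_ne_top μ _)]
    exact tsub_le_iff_right.2 (hn.trans_eq (add_comm _ _))
  set B := F ∩ K n with hB
  have hBm : MeasurableSet B := hFm.inter (hK n).2
  have hBc : IsCompact B := (hK n).1.inter_left hFcl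
  have hBcl : IsClosed B := isClosed_of_cm hXcont hBm hBc
  have hBA : B ⊆ A := inter_subset_left.trans hFA
  have hsub : A \ B ⊆ (A \ F) ∪ (univ \ K n) := by
    intro ω hω
    rcases Classical.em (ω ∈ F) with h | h
    · exact Or.inr ⟨trivial, fun hk => hω.2 ⟨h, hk⟩⟩
    · exact Or.inl ⟨hω.1, h⟩
  calc μ A ≤ μ (B ∪ (A \ B)) := measure_mono fun ω hω => by
        rcases Classical.em (ω ∈ B) with h | h
        · exact Or.inl h
        · exact Or.inr ⟨hω, h⟩
    _ ≤ μ B + μ (A \ B) := measure_union_le _ _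
    _ ≤ μ B + ((ε : ℝ≥0∞) / 2 + (ε : ℝ≥0∞) / 2) := by
        gcongr
        calc μ (A \ B) ≤ μ ((A \ F) ∪ (univ \ K n)) := measure_mono hsub
          _ ≤ μ (A \ F) + μ (univ \ K n) := measure_union_le _ _
          _ ≤ (ε : ℝ≥0∞) / 2 + (ε : ℝ≥0∞) / 2 := add_le_add hFμ hKμ
    _ = μ B + ε := by rw [ENNReal.add_halves]
    _ ≤ (⨆ B ∈ {B : Set Ω | MeasurableSet[sigmaGen X] B ∧ IsClosed B ∧ IsCompact B ∧
          B ⊆ A}, μ B) + ε := by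
        gcongr
        have hBmem : B ∈ {B : Set Ω | MeasurableSet[sigmaGen X] B ∧ IsClosed B ∧ IsCompact B ∧
            B ⊆ A} := ⟨hBm, hBcl, hBc, hBA⟩
        exact le_iSup₂ (f := fun (B : Set Ω)
          (_ : B ∈ {B : Set Ω | MeasurableSet[sigmaGen X] B ∧ IsClosed B ∧ IsCompact B ∧
            B ⊆ A}) => μ B) B hBmem
end

section
/- Let Ω be a Hausdorff space with Borel σ-algebra 𝓕, B_b the space of bounded Borel measurable functions f : Ω → ℝ, and C_b the space of bounded continuous functions. Let φ : B_b → ℝ be a positive linear functional satisfying condition (C). Then there exists a regular finite measure μ ∈ ca⁺_r(𝓕) such that φ(f) = ⟨f,μ⟩ for all f ∈ C_b. -/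
open MeasureTheory Filter Topology Set

variable {Ω : Type*} [TopologicalSpace Ω] [MeasurableSpace Ω] [BorelSpace Ω]

/-- Bounded Borel measurable real-valued functions. -/
def Bb (Ω : Type*) [TopologicalSpace Ω] [MeasurableSpace Ω] : Set (Ω → ℝ) :=
  {f | Measurable f ∧ ∃ M : ℝ, ∀ ω, |f ω| ≤ M}

/-- Bounded continuous real-valued functions. -/
def Cb (Ω : Type*) [TopologicalSpace Ω] : Set (Ω → ℝ) :=
  {f | Continuous f ∧ ∃ M : ℝ, ∀ ω, |f ω| ≤ M}

/-- ca⁺_r(𝓕): regular finite measures on the Borel σ-algebra. -/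
def caReg (Ω : Type*) [TopologicalSpace Ω] [MeasurableSpace Ω] : Set (Measure Ω) :=
  {μ | IsFiniteMeasure μ ∧ ∀ A : Set Ω, MeasurableSet A →
    μ A = ⨆ B ∈ {B : Set Ω | MeasurableSet B ∧ IsClosed B ∧ IsCompact B ∧ B ⊆ A}, μ B}

/-- Condition (C) for a real-valued functional on B_b. -/
def CondCR (φ : (Ω → ℝ) → ℝ) : Prop :=
  ∃ K : ℕ → Set Ω, (∀ n, IsCompact (K n)) ∧ (∀ n, K n ⊆ K (n + 1)) ∧
    ∀ (fn : ℕ → Ω → ℝ) (f : Ω → ℝ), (∀ n, fn n ∈ Bb Ω) → f ∈ Bb Ω →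
      (∀ n ω, fn n ω ≤ fn (n + 1) ω) →
      (∀ m n, m ≤ n → ∀ ω ∈ K m, fn n ω = f ω) →
      (Monotone fun n => φ (fn n)) ∧ Tendsto (fun n => φ (fn n)) atTop (𝓝 (φ f))

/-!
The set function `K ↦ φ(1_K)` on compact sets is a content, since `1_{K ∪ L} = 1_K + 1_L` for
disjoint `K, L`. The measure `μ` it generates is outer regular and inner regular by compact sets
on open sets, hence regular, and satisfies `φ(1_K) ≤ μ K` for compact `K` and `μ U ≤ φ(1_U)`
for open `U`. Approximating a continuous `g ≥ 0` from above by staircases `∑ h • 1_{g > i h}`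
built from open superlevel sets gives `∫ g dμ ≤ φ g`. Condition (C), applied to `1_{K_n} ↑ 1`,
gives `φ 1 ≤ μ Ω`; this lets the inequality pass to `f + c` for constants `c`, so it holds on
all of `C_b`, and applying it to `-f` as well yields equality.
-/

theorem MeasureTheory.Content.measure_innerRegularWRT_isCompact_isOpen {X : Type*}
    [TopologicalSpace X] [R1Space X] [MeasurableSpace X] [BorelSpace X] (μ : Content X) :
    μ.measure.InnerRegularWRT IsCompact IsOpen := by
  intro U hU r hr
  rw [μ.measure_apply hU.measurableSet, μ.outerMeasure_of_isOpen U hU] at hr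
  obtain ⟨K, hKU, hrK⟩ : ∃ K : TopologicalSpace.Compacts X, (K : Set X) ⊆ U ∧ r < μ K := by
    simpa only [Content.innerContent, lt_iSup_iff, exists_prop, TopologicalSpace.Opens.coe_mk]
      using hr
  exact ⟨K, hKU, K.isCompact, hrK.trans_le <|
    (μ.le_outerMeasure_compacts K).trans (le_toMeasure_apply _ _ _)⟩

lemma mem_caReg_of_innerRegularWRT {X : Type*} [TopologicalSpace X] [T2Space X]
    [MeasurableSpace X] [OpensMeasurableSpace X] {μ : Measure X} [IsFiniteMeasure μ]
    [μ.OuterRegular] (hμ : μ.InnerRegularWRT IsCompact IsOpen) : μ ∈ caReg X := by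
  have hmeas := hμ.measurableSet_of_isOpen fun _ _ hK hU => hK.diff hU
  refine ⟨inferInstance, fun A hA => le_antisymm ?_ (iSup₂_le fun B hB => measure_mono hB.2.2.2)⟩
  refine le_of_forall_lt fun r hr => ?_
  obtain ⟨K, hKA, hK, hrK⟩ := hmeas ⟨hA, measure_ne_top μ A⟩ r hr
  exact lt_biSup_iff.mpr ⟨K, ⟨hK.measurableSet, hK.isClosed, hK, hKA⟩, hrK⟩

section BoundedMeasurable

variable {X : Type*} [TopologicalSpace X] [MeasurableSpace X]

def bbSubmodule (X : Type*) [TopologicalSpace X] [MeasurableSpace X] :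
    Submodule ℝ (X → ℝ) where
  carrier := Bb X
  add_mem' := fun ⟨hf, M, hM⟩ ⟨hg, N, hN⟩ =>
    ⟨hf.add hg, M + N, fun x => (abs_add_le _ _).trans (add_le_add (hM x) (hN x))⟩
  zero_mem' := ⟨measurable_const, 0, fun _ => by simp⟩
  smul_mem' c f := fun ⟨hf, M, hM⟩ =>
    ⟨hf.const_smul c, |c| * M, fun x => by
      simpa [abs_mul] using mul_le_mul_of_nonneg_left (hM x) (abs_nonneg c)⟩

lemma const_mem_Bb (c : ℝ) : (fun _ => c) ∈ Bb X :=
  ⟨measurable_const, |c|, fun _ => le_rfl⟩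

lemma one_mem_Bb : (1 : X → ℝ) ∈ Bb X :=
  const_mem_Bb 1

lemma indicator_one_mem_Bb {s : Set X} (hs : MeasurableSet s) :
    s.indicator (1 : X → ℝ) ∈ Bb X :=
  ⟨measurable_const.indicator hs, 1, fun x => by
    by_cases hx : x ∈ s <;> simp [hx]⟩

lemma Cb_subset_Bb [OpensMeasurableSpace X] : Cb X ⊆ Bb X :=
  fun _ ⟨hf, hM⟩ => ⟨hf.measurable, hM⟩

end BoundedMeasurable

structure IsPositiveLinearOnBb {X : Type*} [TopologicalSpace X] [MeasurableSpace X]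
    (φ : (X → ℝ) → ℝ) : Prop where
  map_add : ∀ f ∈ Bb X, ∀ g ∈ Bb X, φ (f + g) = φ f + φ g
  map_smul : ∀ c : ℝ, ∀ f ∈ Bb X, φ (c • f) = c * φ f
  nonneg : ∀ f ∈ Bb X, (∀ x, 0 ≤ f x) → 0 ≤ φ f

namespace IsPositiveLinearOnBb

variable {X : Type*} [TopologicalSpace X] [MeasurableSpace X] {φ : (X → ℝ) → ℝ}
  (hφ : IsPositiveLinearOnBb φ)
include hφ

lemma mono {f g : X → ℝ} (hf : f ∈ Bb X) (hg : g ∈ Bb X) (hfg : f ≤ g) : φ f ≤ φ g := by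
  have hgf : g - f ∈ Bb X := (bbSubmodule X).sub_mem hg hf
  have := hφ.map_add f hf (g - f) hgf
  rw [add_sub_cancel] at this
  linarith [hφ.nonneg _ hgf fun x => sub_nonneg.mpr (hfg x)]

lemma map_neg {f : X → ℝ} (hf : f ∈ Bb X) : φ (-f) = -φ f := by
  simpa using hφ.map_smul (-1) f hf

lemma map_const (c : ℝ) : φ (fun _ => c) = c * φ 1 := by
  rw [← hφ.map_smul c 1 one_mem_Bb]
  congr 1
  ext
  simp

lemma map_add_const {f : X → ℝ} (hf : f ∈ Bb X) (c : ℝ) :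
    φ (f + fun _ => c) = φ f + c * φ 1 := by
  rw [hφ.map_add f hf _ (const_mem_Bb c), hφ.map_const]

lemma map_sum {ι : Type*} (s : Finset ι) {f : ι → X → ℝ} (hf : ∀ i ∈ s, f i ∈ Bb X) :
    φ (∑ i ∈ s, f i) = ∑ i ∈ s, φ (f i) := by
  classical
  induction s using Finset.induction_on with
  | empty => simpa using hφ.map_smul 0 0 (bbSubmodule X).zero_mem
  | insert i s hi ih =>
    rw [Finset.sum_insert hi, Finset.sum_insert hi,
      hφ.map_add _ (hf i (by simp)) _ ((bbSubmodule X).sum_mem fun j hj => hf j (by simp [hj])),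
      ih fun j hj => hf j (by simp [hj])]

lemma indicator_one_nonneg {s : Set X} (hs : MeasurableSet s) : 0 ≤ φ (s.indicator 1) :=
  hφ.nonneg _ (indicator_one_mem_Bb hs) (indicator_nonneg fun _ _ => zero_le_one)

section Content

variable [T2Space X] [OpensMeasurableSpace X]

noncomputable def indicatorContent : Content X where
  toFun K := (φ ((K : Set X).indicator 1)).toNNReal
  mono' K₁ K₂ h := Real.toNNReal_le_toNNReal <|
    hφ.mono (indicator_one_mem_Bb K₁.isCompact.measurableSet)
      (indicator_one_mem_Bb K₂.isCompact.measurableSet)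
      (indicator_le_indicator_of_subset h zero_le_one)
  sup_disjoint' K₁ K₂ h _ _ := by
    have h₁ := indicator_one_mem_Bb K₁.isCompact.measurableSet
    have h₂ := indicator_one_mem_Bb K₂.isCompact.measurableSet
    rw [TopologicalSpace.Compacts.coe_sup, indicator_union_of_disjoint h,
      ← Real.toNNReal_add (hφ.indicator_one_nonneg K₁.isCompact.measurableSet)
        (hφ.indicator_one_nonneg K₂.isCompact.measurableSet)]
    exact congrArg Real.toNNReal (hφ.map_add _ h₁ _ h₂)
  sup_le' K₁ K₂ := by
    have h₁ := indicator_one_mem_Bb K₁.isCompact.measurableSet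
    have h₂ := indicator_one_mem_Bb K₂.isCompact.measurableSet
    have h₁₂ := indicator_one_mem_Bb (K₁ ⊔ K₂).isCompact.measurableSet
    refine (Real.toNNReal_le_toNNReal
      (hφ.mono h₁₂ ((bbSubmodule X).add_mem h₁ h₂) fun x => ?_)).trans ?_
    · by_cases hx₁ : x ∈ K₁ <;> by_cases hx₂ : x ∈ K₂ <;> simp [hx₁, hx₂]
    · rw [hφ.map_add _ h₁ _ h₂]
      exact Real.toNNReal_add_le

lemma indicatorContent_apply (K : TopologicalSpace.Compacts X) :
    hφ.indicatorContent K = ENNReal.ofReal (φ ((K : Set X).indicator 1)) :=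
  rfl

variable [BorelSpace X]

lemma indicatorContent_measure_le {U : Set X} (hU : IsOpen U) :
    hφ.indicatorContent.measure U ≤ ENNReal.ofReal (φ (U.indicator 1)) := by
  rw [Content.measure_apply _ hU.measurableSet, Content.outerMeasure_of_isOpen _ U hU]
  refine iSup₂_le fun K hKU => ?_
  rw [indicatorContent_apply]
  exact ENNReal.ofReal_le_ofReal <| hφ.mono (indicator_one_mem_Bb K.isCompact.measurableSet)
    (indicator_one_mem_Bb hU.measurableSet) (indicator_le_indicator_of_subset hKU zero_le_one)

instance : IsFiniteMeasure hφ.indicatorContent.measure :=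
  ⟨(hφ.indicatorContent_measure_le isOpen_univ).trans_lt ENNReal.ofReal_lt_top⟩

lemma indicatorContent_measureReal_le {U : Set X} (hU : IsOpen U) :
    hφ.indicatorContent.measure.real U ≤ φ (U.indicator 1) :=
  ENNReal.toReal_le_of_le_ofReal (hφ.indicator_one_nonneg hU.measurableSet)
    (hφ.indicatorContent_measure_le hU)

lemma le_indicatorContent_measureReal {K : Set X} (hK : IsCompact K) :
    φ (K.indicator 1) ≤ hφ.indicatorContent.measure.real K := by
  rw [measureReal_def, ← ENNReal.ofReal_le_iff_le_toReal (measure_ne_top _ _),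
    Content.measure_apply _ hK.measurableSet]
  simpa [indicatorContent_apply] using hφ.indicatorContent.le_outerMeasure_compacts ⟨K, hK⟩

end Content

end IsPositiveLinearOnBb

lemma CondCR.le_measureReal_univ {X : Type*} [TopologicalSpace X] [T2Space X]
    [MeasurableSpace X] [OpensMeasurableSpace X] {φ : (X → ℝ) → ℝ} (hC : CondCR φ)
    {μ : Measure X} [IsFiniteMeasure μ]
    (hμ : ∀ K, IsCompact K → φ (K.indicator 1) ≤ μ.real K) : φ 1 ≤ μ.real univ := by
  obtain ⟨K, hK, hKsucc, hC⟩ := hC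
  have hlim := (hC (fun n => (K n).indicator 1) 1
    (fun n => indicator_one_mem_Bb (hK n).measurableSet) one_mem_Bb
    (fun n => indicator_le_indicator_of_subset (hKsucc n) zero_le_one)
    (fun m n hmn x hx => indicator_of_mem (monotone_nat_of_le_succ hKsucc hmn hx) _)).2
  exact le_of_tendsto' hlim fun n => (hμ _ (hK n)).trans (measureReal_mono (subset_univ _))

lemma sum_range_ite_lt_bounds {x h : ℝ} (hx : 0 ≤ x) (hh : 0 ≤ h) (N : ℕ) :
    min x (N * h) ≤ ∑ i ∈ Finset.range N, (if (i : ℝ) * h < x then h else 0) ∧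
      ∑ i ∈ Finset.range N, (if (i : ℝ) * h < x then h else 0) ≤ min (x + h) (N * h) := by
  induction N with
  | zero => simp; linarith
  | succ N ih =>
    rw [Finset.sum_range_succ]
    push_cast
    split_ifs <;> grind

section Integral

variable {X : Type*} [TopologicalSpace X] [MeasurableSpace X] {φ : (X → ℝ) → ℝ}
  {μ : Measure X} [IsFiniteMeasure μ]

lemma integrable_of_mem_Bb {f : X → ℝ} (hf : f ∈ Bb X) : Integrable f μ :=
  let ⟨hfm, M, hM⟩ := hf
  .of_bound hfm.aestronglyMeasurable M (.of_forall hM)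

variable [OpensMeasurableSpace X] (hφ : IsPositiveLinearOnBb φ)
  (hμ : ∀ U, IsOpen U → μ.real U ≤ φ (U.indicator 1))
include hφ hμ

lemma integral_sum_indicator_le {ι : Type*} (s : Finset ι) {c : ι → ℝ} (hc : ∀ i, 0 ≤ c i)
    {U : ι → Set X} (hU : ∀ i, IsOpen (U i)) :
    ∫ x, (∑ i ∈ s, c i • (U i).indicator 1) x ∂μ ≤ φ (∑ i ∈ s, c i • (U i).indicator 1) := by
  have hmeas i : MeasurableSet (U i) := (hU i).measurableSet
  have hmem i : c i • (U i).indicator (1 : X → ℝ) ∈ Bb X :=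
    (bbSubmodule X).smul_mem (c i) (indicator_one_mem_Bb (hmeas i))
  calc ∫ x, (∑ i ∈ s, c i • (U i).indicator 1) x ∂μ = ∑ i ∈ s, c i * μ.real (U i) := by
        simp only [Finset.sum_apply]
        rw [integral_finsetSum s fun i _ => integrable_of_mem_Bb (hmem i)]
        simp [integral_const_mul, integral_indicator_one (hmeas _)]
    _ ≤ ∑ i ∈ s, c i * φ ((U i).indicator 1) :=
        Finset.sum_le_sum fun i _ => mul_le_mul_of_nonneg_left (hμ _ (hU i)) (hc i)
    _ = φ (∑ i ∈ s, c i • (U i).indicator 1) := by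
        rw [hφ.map_sum s fun i _ => hmem i]
        exact Finset.sum_congr rfl fun i _ =>
          (hφ.map_smul _ _ (indicator_one_mem_Bb (hmeas i))).symm

lemma integral_le_of_nonneg {g : X → ℝ} (hg : Continuous g) (hg0 : 0 ≤ g) {M : ℝ}
    (hgM : ∀ x, g x ≤ M) : ∫ x, g x ∂μ ≤ φ g := by
  have hgB : g ∈ Bb X := ⟨hg.measurable, M, fun x => (abs_of_nonneg (hg0 x)).trans_le (hgM x)⟩
  have hφ1 : 0 ≤ φ 1 := hφ.nonneg 1 one_mem_Bb fun _ => zero_le_one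
  refine le_of_forall_pos_le_add fun ε hε => ?_
  set h := ε / (φ 1 + 1)
  have hh : 0 < h := by positivity
  obtain ⟨N, hN⟩ := exists_nat_ge (M / h)
  set U : ℕ → Set X := fun i => {x | i * h < g x}
  set F := ∑ i ∈ Finset.range N, h • (U i).indicator (1 : X → ℝ)
  have hF x : F x = ∑ i ∈ Finset.range N, if (i : ℝ) * h < g x then h else 0 := by
    simp [F, U, indicator_apply]
  have hgF : g ≤ F := fun x => by
    have := (sum_range_ite_lt_bounds (hg0 x) hh.le N).1
    rw [min_eq_left ((hgM x).trans ((div_le_iff₀ hh).mp hN))] at this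
    rw [hF]; exact this
  have hFg : F ≤ g + fun _ => h := fun x => by
    rw [hF]; exact (sum_range_ite_lt_bounds (hg0 x) hh.le N).2.trans (min_le_left _ _)
  have hU i : IsOpen (U i) := isOpen_lt continuous_const hg
  have hFB : F ∈ Bb X := (bbSubmodule X).sum_mem fun i _ =>
    (bbSubmodule X).smul_mem h (indicator_one_mem_Bb (hU i).measurableSet)
  calc ∫ x, g x ∂μ ≤ ∫ x, F x ∂μ :=
        integral_mono (integrable_of_mem_Bb hgB) (integrable_of_mem_Bb hFB) hgF
    _ ≤ φ F := integral_sum_indicator_le hφ hμ _ (fun _ => hh.le) hU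
    _ ≤ φ (g + fun _ => h) :=
        hφ.mono hFB ((bbSubmodule X).add_mem hgB (const_mem_Bb h)) hFg
    _ = φ g + h * φ 1 := hφ.map_add_const hgB h
    _ ≤ φ g + ε := by
        gcongr
        calc h * φ 1 ≤ h * (φ 1 + 1) := by gcongr; linarith
          _ = ε := div_mul_cancel₀ ε (by positivity)

lemma integral_le_of_mem_Cb (hμ1 : φ 1 ≤ μ.real univ) {f : X → ℝ} (hf : f ∈ Cb X) :
    ∫ x, f x ∂μ ≤ φ f := by
  obtain ⟨hfc, M, hM⟩ := hf
  have hfB : f ∈ Bb X := ⟨hfc.measurable, M, hM⟩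
  have hshift := integral_le_of_nonneg hφ hμ (hfc.add (continuous_const (y := |M|)))
    (fun x => show 0 ≤ f x + |M| by linarith [neg_abs_le (f x), hM x, le_abs_self M])
    (M := 2 * |M|)
    (fun x => show f x + |M| ≤ 2 * |M| by linarith [le_abs_self (f x), hM x, le_abs_self M])
  rw [hφ.map_add_const hfB] at hshift
  simp only [Pi.add_apply] at hshift
  rw [integral_add (integrable_of_mem_Bb hfB) (integrable_const _), integral_const,
    smul_eq_mul] at hshift
  nlinarith [mul_le_mul_of_nonneg_left hμ1 (abs_nonneg M)]

lemma integral_eq_of_mem_Cb (hμ1 : φ 1 ≤ μ.real univ) {f : X → ℝ} (hf : f ∈ Cb X) :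
    φ f = ∫ x, f x ∂μ := by
  have hnegf : -f ∈ Cb X := ⟨hf.1.neg, hf.2.imp fun _ hM x => by simpa using hM x⟩
  have := integral_le_of_mem_Cb hφ hμ hμ1 hnegf
  rw [hφ.map_neg (Cb_subset_Bb hf)] at this
  simp only [Pi.neg_apply, integral_neg] at this
  exact le_antisymm (by linarith) (integral_le_of_mem_Cb hφ hμ hμ1 hf)

end Integral

/-- Corollary 1.7, first part: a positive linear functional on B_b satisfying (C) is
represented on C_b by a regular finite Borel measure. -/
theorem stmt12 [T2Space Ω] (φ : (Ω → ℝ) → ℝ)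
    (hadd : ∀ f ∈ Bb Ω, ∀ g ∈ Bb Ω, φ (f + g) = φ f + φ g)
    (hsmul : ∀ c : ℝ, ∀ f ∈ Bb Ω, φ (c • f) = c * φ f)
    (hpos : ∀ f ∈ Bb Ω, (∀ ω, 0 ≤ f ω) → 0 ≤ φ f)
    (hC : CondCR φ) :
    ∃ μ ∈ caReg Ω, ∀ f ∈ Cb Ω, φ f = ∫ ω, f ω ∂μ := by
  have hφ : IsPositiveLinearOnBb φ := ⟨hadd, hsmul, hpos⟩
  refine ⟨hφ.indicatorContent.measure,
    mem_caReg_of_innerRegularWRT (Content.measure_innerRegularWRT_isCompact_isOpen _),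
    fun f hf => integral_eq_of_mem_Cb hφ (fun _ => hφ.indicatorContent_measureReal_le) ?_ hf⟩
  exact hC.le_measureReal_univ fun _ => hφ.le_indicatorContent_measureReal
end

section
/- Let (H_n) be a sequence of compact Hausdorff spaces, U := {u ∈ ∏_n C(H_n) : sup_n ‖u_n‖_∞ < ∞} and V := {ν ∈ ∏_n ca_r(H_n) : Σ_n ‖ν_n‖_tv < ∞}, paired by ⟨u,ν⟩ := Σ_n ⟨u_n, ν_n⟩. Then for every y ∈ ℓ¹, the set A_y = {ν ∈ V : ‖ν_n‖_tv ≤ |y_n| for all n} is compact in the weak topology σ(V, U). -/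
open MeasureTheory Filter Topology Set

/-- Inner regularity by closed compact sets on all Borel sets ("regular" in the paper). -/
def PaperRegular {α : Type*} [TopologicalSpace α] [MeasurableSpace α] (μ : Measure α) :
    Prop :=
  ∀ A : Set α, MeasurableSet A →
    μ A = ⨆ B ∈ {B : Set α | MeasurableSet B ∧ IsClosed B ∧ IsCompact B ∧ B ⊆ A}, μ B

/-- A signed Borel measure is regular if both parts of its Jordan decomposition are. -/
def SignedRegular {α : Type*} [TopologicalSpace α] [MeasurableSpace α]
    (ν : SignedMeasure α) : Prop :=
  PaperRegular ν.toJordanDecomposition.posPart ∧ PaperRegular ν.toJordanDecomposition.negPart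

variable (H : ℕ → Type*) [∀ n, TopologicalSpace (H n)] [∀ n, CompactSpace (H n)]
  [∀ n, T2Space (H n)] [∀ n, MeasurableSpace (H n)] [∀ n, BorelSpace (H n)]

/-- U: sequences of continuous functions with uniformly bounded sup-norms. -/
def Useq : Type _ := {u : ∀ n, C(H n, ℝ) // ∃ M : ℝ, ∀ n, ‖u n‖ ≤ M}

/-- V: sequences of regular signed Borel measures with summable total variation norms. -/
def Vseq : Type _ :=
  {ν : ∀ n, SignedMeasure (H n) // (∀ n, SignedRegular (ν n)) ∧
    (∑' n, (ν n).totalVariation Set.univ) < ⊤}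

/-- The integral of a function against a signed measure, via the Jordan decomposition. -/
noncomputable def smIntegral {α : Type*} [MeasurableSpace α] (ν : SignedMeasure α)
    (f : α → ℝ) : ℝ :=
  (∫ x, f x ∂ν.toJordanDecomposition.posPart) - ∫ x, f x ∂ν.toJordanDecomposition.negPart

/-- The pairing ⟨u,ν⟩ = Σ_n ⟨u_n, ν_n⟩ between U and V. -/
noncomputable def pairUV (u : Useq H) (ν : Vseq H) : ℝ :=
  ∑' n, smIntegral (ν.1 n) (u.1 n)

/-- The weak topology σ(V, U) on V. -/
noncomputable def weakTopV : TopologicalSpace (Vseq H) :=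
  TopologicalSpace.induced (fun ν : Vseq H => fun u : Useq H => pairUV H u ν)
    Pi.topologicalSpace

/-!
Compactness is checked with ultrafilters. Along an ultrafilter on `A_y`, the positive and negative
parts of each `ν_n` have mass at most `|y_n|`, so their integrals against every `f ∈ C(H_n)`
converge. The limits are positive linear functionals, hence, by Riesz–Markov–Kakutani, integrals
against regular measures `μ⁺_n`, `μ⁻_n`, and `ρ_n := μ⁺_n - μ⁻_n` is the coordinatewise weak
limit, with `‖ρ_n‖ ≤ |y_n|`. The pairings `Σ_n ⟨u_n, ν_n⟩` then converge to `Σ_n ⟨u_n, ρ_n⟩` by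
Tannery's theorem, the `n`-th term being dominated by `(sup_m ‖u_m‖) |y_n|`.
-/

open scoped ENNReal NNReal

section SignedMeasure
variable {X : Type*} [MeasurableSpace X]

lemma abs_smIntegral_le {ν : SignedMeasure X} {f : X → ℝ} {C : ℝ} (hf : ∀ x, ‖f x‖ ≤ C) :
    |smIntegral ν f| ≤ C * (ν.totalVariation univ).toReal := by
  have hpos := norm_integral_le_of_norm_le_const (μ := ν.toJordanDecomposition.posPart)
    (Eventually.of_forall hf)
  have hneg := norm_integral_le_of_norm_le_const (μ := ν.toJordanDecomposition.negPart)
    (Eventually.of_forall hf)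
  rw [SignedMeasure.totalVariation, ← measureReal_def, measureReal_add_apply]
  simp only [Real.norm_eq_abs] at hpos hneg
  exact (abs_sub _ _).trans (by linarith)

namespace MeasureTheory.Measure
variable (μ ν : Measure X) [IsFiniteMeasure μ] [IsFiniteMeasure ν]

lemma sub_add_self_comm : μ - ν + ν = ν - μ + μ := by
  have h := sub_toSignedMeasure_eq_toSignedMeasure_sub (μ := μ) (ν := ν)
  rw [sub_eq_sub_iff_add_eq_add] at h
  rw [← toSignedMeasure_eq_toSignedMeasure_iff, toSignedMeasure_add, toSignedMeasure_add, ← h,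
    add_comm]

lemma smIntegral_toSignedMeasure_sub {f : X → ℝ} (hμ : Integrable f μ) (hν : Integrable f ν) :
    smIntegral (μ.toSignedMeasure - ν.toSignedMeasure) f = ∫ x, f x ∂μ - ∫ x, f x ∂ν := by
  have key : ∫ x, f x ∂(μ - ν + ν) = ∫ x, f x ∂(ν - μ + μ) := by
    rw [sub_add_self_comm]
  rw [integral_add_measure (hμ.mono_measure sub_le) hν,
    integral_add_measure (hν.mono_measure sub_le) hμ] at key
  rw [smIntegral, toJordanDecomposition_toSignedMeasure_sub,
    jordanDecompositionOfToSignedMeasureSub_posPart, jordanDecompositionOfToSignedMeasureSub_negPart]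
  linarith

lemma totalVariation_toSignedMeasure_sub_le :
    (μ.toSignedMeasure - ν.toSignedMeasure).totalVariation univ ≤ μ univ + ν univ := by
  rw [SignedMeasure.totalVariation, toJordanDecomposition_toSignedMeasure_sub, add_apply]
  exact add_le_add (sub_le univ) (sub_le univ)

end MeasureTheory.Measure

end SignedMeasure

lemma ContinuousMap.integrable {X : Type*} [TopologicalSpace X] [CompactSpace X]
    [MeasurableSpace X] [OpensMeasurableSpace X] (μ : Measure X) [IsFiniteMeasure μ]
    (f : C(X, ℝ)) : Integrable f μ :=
  (BoundedContinuousFunction.mkOfCompact f).integrable μ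

lemma Ultrafilter.exists_tendsto_of_eventually_abs_le {ι : Type*} (l : Ultrafilter ι)
    {g : ι → ℝ} {C : ℝ} (h : ∀ᶠ i in (l : Filter ι), |g i| ≤ C) : ∃ a, Tendsto g l (𝓝 a) := by
  obtain ⟨a, -, ha⟩ := (isCompact_Icc (a := -C) (b := C)).ultrafilter_le_nhds (l.map g)
    (by rw [Ultrafilter.coe_map, le_principal_iff]; exact h.mono fun i hi => abs_le.1 hi)
  exact ⟨a, ha⟩

section Regular
variable {X : Type*} [TopologicalSpace X] [MeasurableSpace X] [T2Space X] [BorelSpace X]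

lemma paperRegular_of_le {μ' μ : Measure X} [IsFiniteMeasure μ] [μ.Regular] (hle : μ' ≤ μ) :
    PaperRegular μ' := by
  intro A hA
  refine le_antisymm ?_ (iSup₂_le fun B hB => measure_mono hB.2.2.2)
  refine ENNReal.le_of_forall_pos_le_add fun ε hε _ => ?_
  obtain ⟨K, hKA, hK, hμK⟩ := hA.exists_isCompact_lt_add (measure_ne_top μ A)
    (ENNReal.coe_ne_zero.2 hε.ne')
  have hKm : MeasurableSet K := hK.isClosed.measurableSet
  have hdiff : μ' (A \ K) ≤ ε := by
    refine (hle _).trans ?_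
    rw [measure_sdiff hKA hKm.nullMeasurableSet (measure_ne_top μ K)]
    exact tsub_le_iff_left.2 hμK.le
  calc μ' A ≤ μ' K + μ' (A \ K) := by
        rw [← measure_union Set.disjoint_sdiff_right (hA.diff hKm), Set.union_sdiff_cancel hKA]
    _ ≤ _ := add_le_add (le_iSup₂_of_le K ⟨hKm, hK.isClosed, hK, hKA⟩ le_rfl) hdiff

lemma MeasureTheory.Measure.signedRegular_toSignedMeasure_sub (μ ν : Measure X)
    [IsFiniteMeasure μ] [IsFiniteMeasure ν] [μ.Regular] [ν.Regular] :
    SignedRegular (μ.toSignedMeasure - ν.toSignedMeasure) := by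
  rw [SignedRegular, Measure.toJordanDecomposition_toSignedMeasure_sub]
  exact ⟨paperRegular_of_le Measure.sub_le, paperRegular_of_le Measure.sub_le⟩

variable [CompactSpace X]

open CompactlySupported in
theorem exists_regular_tendsto_integral {ι : Type*} (l : Ultrafilter ι) (μ : ι → Measure X)
    [∀ i, IsFiniteMeasure (μ i)] {C : ℝ} (hC : ∀ᶠ i in (l : Filter ι), (μ i).real univ ≤ C) :
    ∃ μ₀ : Measure X, μ₀.Regular ∧ IsFiniteMeasure μ₀ ∧
      ∀ f : C(X, ℝ), Tendsto (fun i => ∫ x, f x ∂μ i) l (𝓝 (∫ x, f x ∂μ₀)) := by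
  have hbound (f : C(X, ℝ)) : ∀ᶠ i in (l : Filter ι), |∫ x, f x ∂μ i| ≤ ‖f‖ * C := by
    filter_upwards [hC] with i hi
    exact (norm_integral_le_of_norm_le_const (Eventually.of_forall f.norm_coe_le_norm)).trans
      (mul_le_mul_of_nonneg_left hi (norm_nonneg f))
  choose L hL using fun f => l.exists_tendsto_of_eventually_abs_le (hbound f)
  have hint (f : C_c(X, ℝ)) (i : ι) : Integrable f (μ i) := f.toContinuousMap.integrable (μ i)
  let Λ : C_c(X, ℝ) →ₚ[ℝ] ℝ :=
    { toFun f := L f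
      map_add' f g := tendsto_nhds_unique (hL (f + g)) <|
        ((hL f).add (hL g)).congr fun i => (integral_add (hint f i) (hint g i)).symm
      map_smul' c f := tendsto_nhds_unique (hL (c • f)) <|
        ((hL f).const_mul c).congr fun i => (integral_const_mul c _).symm
      monotone' f g hfg := le_of_tendsto_of_tendsto' (hL f) (hL g) fun i =>
        integral_mono (hint _ _) (hint _ _) hfg }
  refine ⟨RealRMK.rieszMeasure Λ, inferInstance, inferInstance, fun f => ?_⟩
  convert hL f
  exact RealRMK.integral_rieszMeasure Λ (CompactlySupportedContinuousMap.continuousMapEquiv f)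

theorem exists_signedRegular_tendsto_smIntegral {ι : Type*} (l : Ultrafilter ι)
    (ν : ι → SignedMeasure X) {c : ℝ≥0}
    (hc : ∀ᶠ i in (l : Filter ι), (ν i).totalVariation univ ≤ c) :
    ∃ ρ : SignedMeasure X, SignedRegular ρ ∧ ρ.totalVariation univ ≤ c ∧
      ∀ f : C(X, ℝ), Tendsto (fun i => smIntegral (ν i) f) l (𝓝 (smIntegral ρ f)) := by
  set p := fun i => (ν i).toJordanDecomposition.posPart
  set q := fun i => (ν i).toJordanDecomposition.negPart
  have hmass : ∀ᶠ i in (l : Filter ι), (p i).real univ + (q i).real univ ≤ c :=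
    hc.mono fun i hi => by
      rw [← measureReal_add_apply]
      exact ENNReal.toReal_le_coe_of_le_coe hi
  obtain ⟨μ₁, _, _, hμ₁⟩ := exists_regular_tendsto_integral l p <|
    hmass.mono fun i hi => by linarith [measureReal_nonneg (μ := q i) (s := univ)]
  obtain ⟨μ₂, _, _, hμ₂⟩ := exists_regular_tendsto_integral l q <|
    hmass.mono fun i hi => by linarith [measureReal_nonneg (μ := p i) (s := univ)]
  refine ⟨μ₁.toSignedMeasure - μ₂.toSignedMeasure, Measure.signedRegular_toSignedMeasure_sub _ _,
    ?_, fun f => ?_⟩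
  · have hlim := (hμ₁ 1).add (hμ₂ 1)
    simp only [ContinuousMap.one_apply, integral_const, smul_eq_mul, mul_one] at hlim
    calc (μ₁.toSignedMeasure - μ₂.toSignedMeasure).totalVariation univ
        ≤ μ₁ univ + μ₂ univ := Measure.totalVariation_toSignedMeasure_sub_le _ _
      _ = ENNReal.ofReal (μ₁.real univ + μ₂.real univ) := by
        rw [ENNReal.ofReal_add measureReal_nonneg measureReal_nonneg, ofReal_measureReal,
          ofReal_measureReal]
      _ ≤ c := ENNReal.ofReal_le_of_le_toReal (le_of_tendsto hlim hmass)
  · rw [Measure.smIntegral_toSignedMeasure_sub _ _ (f.integrable _) (f.integrable _)]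
    exact (hμ₁ f).sub (hμ₂ f)

end Regular

lemma tendsto_tsum_smIntegral {ι : Type*} {X : ℕ → Type*} [∀ n, MeasurableSpace (X n)]
    {l : Filter ι} {ν : ι → ∀ n, SignedMeasure (X n)} {ν₀ : ∀ n, SignedMeasure (X n)}
    {y : ℕ → ℝ} (hy : Summable fun n => |y n|)
    (hν : ∀ᶠ i in l, ∀ n, (ν i n).totalVariation univ ≤ ENNReal.ofReal |y n|)
    {u : ∀ n, X n → ℝ} {M : ℝ} (hM : 0 ≤ M) (hu : ∀ n x, ‖u n x‖ ≤ M)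
    (hlim : ∀ n, Tendsto (fun i => smIntegral (ν i n) (u n)) l (𝓝 (smIntegral (ν₀ n) (u n)))) :
    Tendsto (fun i => ∑' n, smIntegral (ν i n) (u n)) l (𝓝 (∑' n, smIntegral (ν₀ n) (u n))) :=
  tendsto_tsum_of_dominated_convergence (hy.mul_left M) hlim <| hν.mono fun _ hi n =>
    (abs_smIntegral_le (hu n)).trans <|
      mul_le_mul_of_nonneg_left (ENNReal.toReal_le_of_le_ofReal (abs_nonneg _) (hi n)) hM

/-- Lemma 3.2: for every y ∈ ℓ¹, the set A_y = {ν ∈ V : ‖ν_n‖_tv ≤ |y_n|} is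
σ(V, U)-compact. -/
theorem stmt15 (y : ℕ → ℝ) (hy : Summable fun n => |y n|) :
    @IsCompact (Vseq H) (weakTopV H)
      {ν : Vseq H | ∀ n, (ν.1 n).totalVariation Set.univ ≤ ENNReal.ofReal |y n|} := by
  let _ := weakTopV H
  rw [isCompact_iff_ultrafilter_le_nhds]
  intro F hF
  have hA := le_principal_iff.1 hF
  choose ρ hρreg hρtv hρlim using fun n =>
    exists_signedRegular_tendsto_smIntegral F (fun ν : Vseq H => ν.1 n) (c := (|y n|).toNNReal)
      (Filter.mem_of_superset hA fun ν hν => hν n)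
  have hρsum : ∑' n, (ρ n).totalVariation univ < ⊤ :=
    calc ∑' n, (ρ n).totalVariation univ ≤ ∑' n, ENNReal.ofReal |y n| := ENNReal.tsum_le_tsum hρtv
      _ = ENNReal.ofReal (∑' n, |y n|) :=
        (ENNReal.ofReal_tsum_of_nonneg (fun n => abs_nonneg _) hy).symm
      _ < ⊤ := ENNReal.ofReal_lt_top
  let ν₀ : Vseq H := ⟨ρ, hρreg, hρsum⟩
  refine ⟨ν₀, hρtv, ?_⟩
  have hind : Topology.IsInducing fun (ν : Vseq H) (u : Useq H) => pairUV H u ν :=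
    Topology.IsInducing.induced _
  rw [← tendsto_id', hind.tendsto_nhds_iff, tendsto_pi_nhds]
  intro u
  obtain ⟨M, hM⟩ := u.2
  exact tendsto_tsum_smIntegral hy hA ((norm_nonneg _).trans (hM 0))
    (fun n x => ((u.1 n).norm_coe_le_norm x).trans (hM n)) fun n => hρlim n (u.1 n)
end

section
/- Let s : ℓ^∞ → ℝ be the functional s(f) := sup_m f(m) on the space ℓ^∞ of bounded functions f : ℕ → ℝ. Then s is increasing and convex, s(f) = sup_{μ ∈ ca⁺₁(ℕ)} ⟨f,μ⟩ for all f ∈ ℓ^∞, but if f ∈ ℓ^∞ does not attain its supremum, then there is no countably additive measure μ ∈ ca⁺(ℕ) with s(f) = ⟨f,μ⟩ − s*_{ℓ^∞}(μ); in particular s does not admit a max-representation over ca⁺(ℕ). -/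
open MeasureTheory Filter Topology Set

/-- ℓ^∞: the set of bounded functions f : ℕ → ℝ. -/
def Binf : Set (ℕ → ℝ) := {f | ∃ M : ℝ, ∀ n, |f n| ≤ M}

/-- The functional s(f) = sup_m f(m). -/
noncomputable def supF (f : ℕ → ℝ) : ℝ := sSup (Set.range f)

/-- The convex conjugate s*_{ℓ^∞} of s at a measure μ on ℕ. -/
noncomputable def supFConj (μ : Measure ℕ) : EReal :=
  ⨆ f ∈ Binf, ((∫ m, f m ∂μ : ℝ) : EReal) - ((supF f : ℝ) : EReal)

/-!
The sup-representation comes from the Dirac measures: ⟨f, δ_m⟩ = f(m). The conjugate is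
`0` on probability measures and `+∞` on every other finite measure (test it against large
constants), so a max-representation would require a probability measure μ with
∫ f dμ = sup f. But `sup f - f` is strictly positive when the supremum is not attained, and
the integral of a strictly positive function against a nonzero measure is strictly positive.
-/

lemma bddAbove_range_of_mem_Binf {f : ℕ → ℝ} (hf : f ∈ Binf) : BddAbove (range f) := by
  obtain ⟨M, hM⟩ := hf
  exact ⟨M, by rintro _ ⟨n, rfl⟩; exact (abs_le.1 (hM n)).2⟩

lemma le_supF {f : ℕ → ℝ} (hf : f ∈ Binf) (m : ℕ) : f m ≤ supF f :=
  le_csSup (bddAbove_range_of_mem_Binf hf) ⟨m, rfl⟩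

lemma supF_le {f : ℕ → ℝ} {c : ℝ} (h : ∀ m, f m ≤ c) : supF f ≤ c :=
  csSup_le (range_nonempty f) (forall_mem_range.2 h)

lemma supF_mono {f g : ℕ → ℝ} (hf : f ∈ Binf) (hgf : ∀ n, g n ≤ f n) : supF g ≤ supF f :=
  supF_le fun n => (hgf n).trans (le_supF hf n)

lemma supF_smul_add_smul_le {f g : ℕ → ℝ} (hf : f ∈ Binf) (hg : g ∈ Binf) {a b : ℝ}
    (ha : 0 ≤ a) (hb : 0 ≤ b) : supF (a • f + b • g) ≤ a * supF f + b * supF g :=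
  supF_le fun n => add_le_add (mul_le_mul_of_nonneg_left (le_supF hf n) ha)
    (mul_le_mul_of_nonneg_left (le_supF hg n) hb)

lemma const_mem_Binf (c : ℝ) : (fun _ : ℕ => c) ∈ Binf := ⟨|c|, fun _ => le_rfl⟩

lemma supF_const (c : ℝ) : supF (fun _ : ℕ => c) = c := by
  simp [supF, range_const]

lemma coe_supF_eq_iSup {f : ℕ → ℝ} (hf : f ∈ Binf) :
    ((supF f : ℝ) : EReal) = ⨆ m, ((f m : ℝ) : EReal) :=
  Monotone.map_ciSup_of_continuousAt continuous_coe_real_ereal.continuousAt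
    EReal.coe_strictMono.monotone (bddAbove_range_of_mem_Binf hf)

lemma integrable_of_mem_Binf {f : ℕ → ℝ} (hf : f ∈ Binf) (μ : Measure ℕ) [IsFiniteMeasure μ] :
    Integrable f μ := by
  obtain ⟨M, hM⟩ := hf
  exact ⟨measurable_from_top.aestronglyMeasurable,
    HasFiniteIntegral.of_bounded (C := M) (ae_of_all _ fun n => by simpa using hM n)⟩

lemma integral_le_supF {f : ℕ → ℝ} (hf : f ∈ Binf) (μ : Measure ℕ) [IsProbabilityMeasure μ] :
    ∫ m, f m ∂μ ≤ supF f :=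
  calc ∫ m, f m ∂μ ≤ ∫ _, supF f ∂μ :=
        integral_mono (integrable_of_mem_Binf hf μ) (integrable_const _) (le_supF hf)
    _ = supF f := by simp

lemma integral_lt_supF {f : ℕ → ℝ} (hf : f ∈ Binf) (hf_max : ¬ ∃ m, f m = supF f)
    (μ : Measure ℕ) [IsProbabilityMeasure μ] : ∫ m, f m ∂μ < supF f := by
  have hgap_pos : ∀ m, 0 < supF f - f m := fun m =>
    sub_pos.2 ((le_supF hf m).lt_of_ne fun h => hf_max ⟨m, h⟩)
  have hgap_int : Integrable (fun m => supF f - f m) μ :=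
    (integrable_const _).sub (integrable_of_mem_Binf hf μ)
  have hsupport : Function.support (fun m => supF f - f m) = univ :=
    eq_univ_of_forall fun m => (hgap_pos m).ne'
  have : 0 < ∫ m, (supF f - f m) ∂μ := by
    rw [integral_pos_iff_support_of_nonneg (fun m => (hgap_pos m).le) hgap_int, hsupport]
    simp
  rw [integral_sub (integrable_const _) (integrable_of_mem_Binf hf μ)] at this
  simpa using this

lemma coe_supF_eq_iSup_integral {f : ℕ → ℝ} (hf : f ∈ Binf) :
    ((supF f : ℝ) : EReal) =
      ⨆ μ ∈ {μ : Measure ℕ | IsProbabilityMeasure μ}, ((∫ m, f m ∂μ : ℝ) : EReal) := by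
  refine le_antisymm ?_ (iSup₂_le fun μ hμ => ?_)
  · rw [coe_supF_eq_iSup hf]
    refine iSup_le fun m => ?_
    have hδ : Measure.dirac m ∈ {μ : Measure ℕ | IsProbabilityMeasure μ} :=
      Measure.dirac.isProbabilityMeasure
    simpa [integral_dirac] using le_iSup₂ (f := fun (μ : Measure ℕ) (_ : IsProbabilityMeasure μ)
      => ((∫ m, f m ∂μ : ℝ) : EReal)) (Measure.dirac m) hδ
  · have : IsProbabilityMeasure μ := hμ
    exact_mod_cast integral_le_supF hf μ

lemma le_supFConj {g : ℕ → ℝ} (hg : g ∈ Binf) (μ : Measure ℕ) :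
    ((∫ m, g m ∂μ : ℝ) : EReal) - ((supF g : ℝ) : EReal) ≤ supFConj μ :=
  le_iSup₂ (f := fun g (_ : g ∈ Binf) => ((∫ m, g m ∂μ : ℝ) : EReal) - ((supF g : ℝ) : EReal))
    g hg

lemma supFConj_eq_zero (μ : Measure ℕ) [IsProbabilityMeasure μ] : supFConj μ = 0 := by
  refine le_antisymm (iSup₂_le fun g hg => ?_) ?_
  · rw [← EReal.coe_sub]
    exact_mod_cast sub_nonpos.2 (integral_le_supF hg μ)
  · simpa [supF_const] using le_supFConj (const_mem_Binf 0) μ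

lemma supFConj_eq_top (μ : Measure ℕ) [IsFiniteMeasure μ] (hμ : μ univ ≠ 1) :
    supFConj μ = ⊤ := by
  have ht : μ.real univ - 1 ≠ 0 := by
    rw [sub_ne_zero, measureReal_def, Ne, ENNReal.toReal_eq_one_iff]
    exact hμ
  refine (EReal.eq_top_iff_forall_lt _).2 fun y => ?_
  set c := (y + 1) / (μ.real univ - 1)
  have hc : (μ.real univ - 1) * c = y + 1 := mul_div_cancel₀ _ ht
  have hconst := le_supFConj (const_mem_Binf c) μ
  rw [integral_const, supF_const, smul_eq_mul, ← EReal.coe_sub, ← sub_one_mul, hc] at hconst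
  exact (EReal.coe_lt_coe_iff.2 (lt_add_one y)).trans_le hconst

/-- Example 1.2.1: s(f) = sup_m f(m) is increasing and convex on ℓ^∞, it has the
sup-representation s(f) = sup_{μ ∈ ca⁺₁(ℕ)} ⟨f,μ⟩ over countably additive probability
measures, but if f does not attain its supremum then s(f) is not of the form
⟨f,μ⟩ − s*_{ℓ^∞}(μ) for any countably additive finite measure μ; so s admits no
max-representation over ca⁺(ℕ). -/
theorem stmt19 :
    (∀ f ∈ Binf, ∀ g ∈ Binf, (∀ n, g n ≤ f n) → supF g ≤ supF f) ∧
    (∀ f ∈ Binf, ∀ g ∈ Binf, ∀ a b : ℝ, 0 ≤ a → 0 ≤ b → a + b = 1 →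
      supF (a • f + b • g) ≤ a * supF f + b * supF g) ∧
    (∀ f ∈ Binf, ((supF f : ℝ) : EReal) =
      ⨆ μ ∈ {μ : Measure ℕ | IsProbabilityMeasure μ}, ((∫ m, f m ∂μ : ℝ) : EReal)) ∧
    (∀ f ∈ Binf, (¬ ∃ m : ℕ, f m = supF f) →
      ¬ ∃ μ : Measure ℕ, IsFiniteMeasure μ ∧
        ((supF f : ℝ) : EReal) = ((∫ m, f m ∂μ : ℝ) : EReal) - supFConj μ) := by
  refine ⟨fun f hf g _ => supF_mono hf,
    fun f hf g hg a b ha hb _ => supF_smul_add_smul_le hf hg ha hb,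
    fun f hf => coe_supF_eq_iSup_integral hf, ?_⟩
  rintro f hf hf_max ⟨μ, hμ_fin, hrep⟩
  by_cases hμ : μ univ = 1
  · have : IsProbabilityMeasure μ := ⟨hμ⟩
    rw [supFConj_eq_zero μ, sub_zero, EReal.coe_eq_coe_iff] at hrep
    exact (integral_lt_supF hf hf_max μ).ne' hrep
  · rw [supFConj_eq_top μ hμ, EReal.sub_top] at hrep
    exact EReal.coe_ne_bot _ hrep
end
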